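/- arXiv:2308.05138 — 11 statements merged into one kernel-verified Lean document; each statement's English description precedes it below -/
import Mathlib

section
/- Let n ≥ 2 and d ≥ 1 be integers. The convex hull Δ in ℝ^{n-1} of the points P_i = d·e_i (2 ≤ i ≤ n) and R = (−d,…,−d) together with 0 is exactly the set of points (u_2,…,u_n) ∈ ℝ^{n-1} satisfying ∑_{i=2}^n u_i ≤ d and ∑_{i=2}^n u_i − n·u_{i_0} ≤ d for each 2 ≤ i_0 ≤ n. -/
/-- For `n ≥ 2`, `d ≥ 1`, the convex hull in `ℝ^{n-1}` of `0`, the points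
`P_i = d·e_i` and `R = (-d,…,-d)` is exactly the set of `u` with `∑ u_i ≤ d` and
`∑ u_i - n·u_{i₀} ≤ d` for every `i₀`. -/
theorem stmt1 (n d : ℕ) (hn : 2 ≤ n) (hd : 1 ≤ d) :
    convexHull ℝ
      (insert (fun _ => -(d : ℝ))
        (insert 0
          (Set.range fun i : Fin (n - 1) => fun j : Fin (n - 1) =>
            if j = i then (d : ℝ) else 0)))
      = {u : Fin (n - 1) → ℝ |
          (∑ i, u i) ≤ d ∧ ∀ i0 : Fin (n - 1), (∑ i, u i) - n * u i0 ≤ d} := by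
  have hD : (0:ℝ) < d := by exact_mod_cast hd
  have hN : (2:ℝ) ≤ n := by exact_mod_cast hn
  have hN0 : (0:ℝ) < n := by linarith
  have hm : ((n - 1 : ℕ) : ℝ) = (n:ℝ) - 1 := by
    rw [Nat.cast_sub (by omega : 1 ≤ n)]; norm_num
  have hcard : ((Finset.univ : Finset (Fin (n-1))).card : ℝ) = (n:ℝ) - 1 := by
    rw [Finset.card_univ, Fintype.card_fin, hm]
  apply Set.Subset.antisymm
  · -- convexHull ⊆ target
    apply convexHull_min
    · intro x hx
      simp only [Set.mem_insert_iff, Set.mem_range] at hx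
      rcases hx with rfl | rfl | ⟨i, rfl⟩
      · constructor
        · simp only [Finset.sum_const, nsmul_eq_mul, hcard]
          nlinarith
        · intro i0
          simp only [Finset.sum_const, nsmul_eq_mul, hcard]
          nlinarith
      · constructor
        · simp [hD.le]
        · intro i0; simp [hD.le]
      · have hsum : (∑ j : Fin (n-1), if j = i then (d:ℝ) else 0) = d := by
          simp
        constructor
        · simp only [hsum]; exact le_refl _
        · intro i0
          simp only [hsum]
          by_cases h : i0 = i
          · subst h; simp only [hsum, if_true]; nlinarith
          · simp only [hsum, if_neg h, mul_zero]; linarith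
    · -- convexity
      intro x hx y hy a b ha hb hab
      obtain ⟨hx1, hx2⟩ := hx
      obtain ⟨hy1, hy2⟩ := hy
      have key : ∀ i, (a • x + b • y) i = a * x i + b * y i := by
        intro i; simp [smul_eq_mul]
      constructor
      · have : ∑ i, (a • x + b • y) i = a * ∑ i, x i + b * ∑ i, y i := by
          simp only [key, Finset.sum_add_distrib, Finset.mul_sum]
        rw [this]
        nlinarith [mul_le_mul_of_nonneg_left hx1 ha, mul_le_mul_of_nonneg_left hy1 hb]
      · intro i0
        have h1 : ∑ i, (a • x + b • y) i = a * ∑ i, x i + b * ∑ i, y i := by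
          simp only [key, Finset.sum_add_distrib, Finset.mul_sum]
        rw [h1, key]
        nlinarith [mul_le_mul_of_nonneg_left (hx2 i0) ha,
          mul_le_mul_of_nonneg_left (hy2 i0) hb]
  · -- target ⊆ convexHull
    intro u hu
    obtain ⟨hs, hc⟩ := hu
    set s := ∑ i, u i with hsdef
    set D := (d:ℝ)
    set N := (n:ℝ)
    set w : Option (Fin (n-1)) → ℝ := fun o =>
      match o with
      | none => (D - s) / (N * D)
      | some j => (N * u j + D - s) / (N * D)
      with hw
    set z : Option (Fin (n-1)) → (Fin (n-1) → ℝ) := fun o =>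
      match o with
      | none => fun _ => -D
      | some j => fun i => if i = j then D else 0
      with hz
    have hND : (0:ℝ) < N * D := by positivity
    have hwn : ∀ i ∈ (Finset.univ : Finset (Option (Fin (n-1)))), 0 ≤ w i := by
      intro i _
      match i with
      | none => exact div_nonneg (by linarith) hND.le
      | some j =>
        have := hc j
        exact div_nonneg (by linarith) hND.le
    have hwsum : ∑ i : Option (Fin (n-1)), w i = 1 := by
      rw [Fintype.sum_option]
      have : ∑ j : Fin (n-1), w (some j)
          = (N * s + ((n:ℝ)-1) * (D - s)) / (N * D) := by
        simp only [hw]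
        rw [← Finset.sum_div]
        congr 1
        simp only [add_sub_assoc]
        rw [Finset.sum_add_distrib, ← Finset.mul_sum, Finset.sum_const, nsmul_eq_mul, hcard,
          ← hsdef]
      rw [this]
      simp only [hw]
      field_simp
      ring
    have hzmem : ∀ i ∈ (Finset.univ : Finset (Option (Fin (n-1)))), z i ∈
        (insert (fun _ => -(d : ℝ))
          (insert 0
            (Set.range fun i : Fin (n - 1) => fun j : Fin (n - 1) =>
              if j = i then (d : ℝ) else 0))) := by
      intro i _
      match i with
      | none => left; rfl
      | some j => right; right; exact ⟨j, rfl⟩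
    have hcm := Finset.centerMass_mem_convexHull (Finset.univ) hwn (by rw [hwsum]; norm_num) hzmem
    have heq : (Finset.univ : Finset (Option (Fin (n-1)))).centerMass w z = u := by
      rw [Finset.centerMass_eq_of_sum_1 _ _ hwsum]
      funext j
      rw [Finset.sum_apply]
      simp only [Pi.smul_apply, smul_eq_mul]
      rw [Fintype.sum_option]
      have hinner : ∑ k : Fin (n-1), w (some k) * z (some k) j = w (some j) * D := by
        simp only [hz, mul_ite, mul_zero]
        rw [Finset.sum_ite_eq]
        simp
      rw [hinner]
      have hNne : N ≠ 0 := hN0.ne'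
      have hDne : D ≠ 0 := hD.ne'
      simp only [hw, hz]
      field_simp
      ring
    rw [heq] at hcm
    exact hcm
end

section
/- Let n > m ≥ 1 and d ≥ 1 be integers. In ℝ^{n+m-1} with coordinates (u_2,…,u_n, v_1,…,v_m), let P_i = d·e_{u_i} (2 ≤ i ≤ n), Q_j = d·e_{v_j} (1 ≤ j ≤ m), and R = (−d,…,−d, d,…,d) (entry −d in each u-coordinate and d in each v-coordinate). Then the cone ℝ_{≥0}·Δ generated by the convex hull Δ of {0, P_i, Q_j, R} is exactly the set of points satisfying u_i + v_j ≥ 0 for all i, j and v_j ≥ 0 for all j. -/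
/-!
The inequalities `u_i + v_j ≥ 0`, `v_j ≥ 0` hold at every vertex and cut out a convex cone, which
therefore contains the cone over `Δ`. Conversely, if `x` satisfies them then
`max (0, maxᵢ (-u_i)) ≤ minⱼ v_j`, so some `s ≥ 0` has `-u_i ≤ d s ≤ v_j` for all `i, j`, and
`x = ∑ᵢ (u_i/d + s) P_i + ∑ⱼ (v_j/d - s) Q_j + s R` is a nonnegative combination of vertices.
As `0` is a vertex, such combinations are exactly the points of `ℝ_{≥0}·Δ`.
-/

open Sum

/-- The vertex `P_i = d·e_{u_i}` of the Newton polytope of `f_a`. -/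
def Ppt (n m d : ℕ) (i : Fin (n - 1)) : Fin (n - 1) ⊕ Fin m → ℝ :=
  fun k => if k = Sum.inl i then (d : ℝ) else 0

/-- The vertex `Q_j = d·e_{v_j}` of the Newton polytope of `f_a`. -/
def Qpt (n m d : ℕ) (j : Fin m) : Fin (n - 1) ⊕ Fin m → ℝ :=
  fun k => if k = Sum.inr j then (d : ℝ) else 0

/-- The vertex `R` (all `u`-coordinates `-d`, all `v`-coordinates `d`). -/
def Rpt (n m d : ℕ) : Fin (n - 1) ⊕ Fin m → ℝ :=
  Sum.elim (fun _ => -(d : ℝ)) (fun _ => (d : ℝ))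

/-- The Newton polytope `Δ(f_a)`: convex hull of `0`, the `P_i`, the `Q_j` and `R`. -/
def NPolytope (n m d : ℕ) : Set (Fin (n - 1) ⊕ Fin m → ℝ) :=
  convexHull ℝ
    (insert 0 (insert (Rpt n m d) (Set.range (Ppt n m d) ∪ Set.range (Qpt n m d))))

namespace ConvexCone

variable {𝕜 E : Type*} [Field 𝕜] [LinearOrder 𝕜] [IsStrictOrderedRing 𝕜] [AddCommGroup E]
  [Module 𝕜 E] {s : Set E} {x : E}

omit [IsStrictOrderedRing 𝕜] in
theorem hull_convexHull : hull 𝕜 (convexHull 𝕜 s) = hull 𝕜 s :=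
  le_antisymm (hull_min (convexHull_min subset_hull (hull 𝕜 s).convex))
    (hull_min ((subset_convexHull 𝕜 s).trans subset_hull))

theorem exists_nonneg_smul_mem_convexHull_iff_mem_hull (h₀ : (0 : E) ∈ s) :
    (∃ c : 𝕜, 0 ≤ c ∧ ∃ y ∈ convexHull 𝕜 s, x = c • y) ↔ x ∈ hull 𝕜 s := by
  simp only [← hull_convexHull (s := s), mem_hull_of_convex (convex_convexHull 𝕜 s),
    Set.mem_smul_set]
  constructor
  · rintro ⟨c, hc, y, hy, rfl⟩
    rcases hc.eq_or_lt with rfl | hc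
    · exact ⟨1, one_pos, 0, subset_convexHull 𝕜 s h₀, by simp⟩
    · exact ⟨c, hc, y, hy, rfl⟩
  · rintro ⟨c, hc, y, hy, rfl⟩
    exact ⟨c, hc.le, y, hy, rfl⟩

theorem nonneg_of_mem_hull (φ : E →ₗ[𝕜] 𝕜) (hφ : ∀ z ∈ s, 0 ≤ φ z) (hx : x ∈ hull 𝕜 s) :
    0 ≤ φ x :=
  hull_min (C := (positive 𝕜 𝕜).comap φ) hφ hx

end ConvexCone

theorem exists_between_of_finite_of_forall_le {α ι κ : Type*} [ConditionallyCompleteLattice α]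
    [Finite ι] (a₀ : α) (a : ι → α) (b : κ → α) (ha₀ : ∀ j, a₀ ≤ b j)
    (hab : ∀ i j, a i ≤ b j) : ∃ t, a₀ ≤ t ∧ (∀ i, a i ≤ t) ∧ ∀ j, t ≤ b j := by
  have hbdd : BddAbove (insert a₀ (Set.range a)) := ((Set.finite_range a).insert a₀).bddAbove
  refine ⟨sSup (insert a₀ (Set.range a)), le_csSup hbdd (Set.mem_insert _ _),
    fun i => le_csSup hbdd (Set.mem_insert_of_mem _ ⟨i, rfl⟩), fun j => ?_⟩
  refine csSup_le (Set.insert_nonempty _ _) ?_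
  rintro _ (rfl | ⟨i, rfl⟩)
  exacts [ha₀ j, hab i j]

section NewtonPolytope

variable {n m d : ℕ}

def NVertices (n m d : ℕ) : Set (Fin (n - 1) ⊕ Fin m → ℝ) :=
  insert 0 (insert (Rpt n m d) (Set.range (Ppt n m d) ∪ Set.range (Qpt n m d)))

theorem NPolytope_eq_convexHull : NPolytope n m d = convexHull ℝ (NVertices n m d) := rfl

theorem zero_mem_NVertices : (0 : Fin (n - 1) ⊕ Fin m → ℝ) ∈ NVertices n m d :=
  Set.mem_insert _ _

theorem NVertices_inl_add_inr_nonneg (i : Fin (n - 1)) (j : Fin m) :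
    ∀ z ∈ NVertices n m d, 0 ≤ z (inl i) + z (inr j) := by
  rintro z (rfl | rfl | ⟨i', rfl⟩ | ⟨j', rfl⟩) <;>
    simp [Ppt, Qpt, Rpt] <;> split_ifs <;> positivity

theorem NVertices_inr_nonneg (j : Fin m) : ∀ z ∈ NVertices n m d, 0 ≤ z (inr j) := by
  rintro z (rfl | rfl | ⟨i', rfl⟩ | ⟨j', rfl⟩) <;>
    simp [Ppt, Qpt, Rpt]
  split_ifs <;> positivity

theorem eq_sum_smul_Ppt_add_sum_smul_Qpt_add_smul_Rpt (hd : 0 < d)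
    (x : Fin (n - 1) ⊕ Fin m → ℝ) (s : ℝ) :
    x = ∑ i, (x (inl i) / d + s) • Ppt n m d i + ∑ j, (x (inr j) / d - s) • Qpt n m d j
      + s • Rpt n m d := by
  have hd' : (d : ℝ) ≠ 0 := by positivity
  funext k
  cases k <;> simp [Ppt, Qpt, Rpt, Finset.sum_apply] <;> field_simp <;> ring

theorem inequalities_of_mem_hull_NVertices {x : Fin (n - 1) ⊕ Fin m → ℝ}
    (hx : x ∈ ConvexCone.hull ℝ (NVertices n m d)) :
    (∀ i j, 0 ≤ x (inl i) + x (inr j)) ∧ ∀ j, 0 ≤ x (inr j) :=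
  ⟨fun i j => ConvexCone.nonneg_of_mem_hull
      (LinearMap.proj (R := ℝ) (φ := fun _ => ℝ) (inl i) + LinearMap.proj (inr j))
      (NVertices_inl_add_inr_nonneg i j) hx,
    fun j => ConvexCone.nonneg_of_mem_hull (LinearMap.proj (R := ℝ) (φ := fun _ => ℝ) (inr j))
      (NVertices_inr_nonneg j) hx⟩

theorem mem_hull_NVertices_of_inequalities (hd : 0 < d) {x : Fin (n - 1) ⊕ Fin m → ℝ}
    (hu : ∀ i j, 0 ≤ x (inl i) + x (inr j)) (hv : ∀ j, 0 ≤ x (inr j)) :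
    x ∈ ConvexCone.hull ℝ (NVertices n m d) := by
  have hd₀ : (0 : ℝ) ≤ d := d.cast_nonneg
  obtain ⟨s, hs, hsu, hsv⟩ := exists_between_of_finite_of_forall_le 0
    (fun i => -x (inl i) / d) (fun j => x (inr j) / d) (fun j => div_nonneg (hv j) hd₀)
    (fun i j => div_le_div_of_nonneg_right (neg_le_iff_add_nonneg'.mpr (hu i j)) hd₀)
  let K := (ConvexCone.hull ℝ (NVertices n m d)).toPointedCone
    (ConvexCone.subset_hull zero_mem_NVertices)
  have hK : NVertices n m d ⊆ K := fun z hz => ConvexCone.subset_hull hz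
  change x ∈ K
  rw [eq_sum_smul_Ppt_add_sum_smul_Qpt_add_smul_Rpt hd x s]
  refine add_mem (add_mem (sum_mem fun i _ => K.smul_mem ?_ (hK ?_))
    (sum_mem fun j _ => K.smul_mem (sub_nonneg.mpr (hsv j)) (hK ?_))) (K.smul_mem hs (hK ?_))
  · linarith [hsu i, neg_div (d : ℝ) (x (inl i))]
  all_goals simp [NVertices]

end NewtonPolytope

theorem stmt2_general (n m d : ℕ) (hd : 1 ≤ d) :
    {x : Fin (n - 1) ⊕ Fin m → ℝ | ∃ c : ℝ, 0 ≤ c ∧ ∃ y ∈ NPolytope n m d, x = c • y}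
      = {x : Fin (n - 1) ⊕ Fin m → ℝ |
          (∀ i j, 0 ≤ x (inl i) + x (inr j)) ∧ ∀ j, 0 ≤ x (inr j)} := by
  ext x
  simp only [Set.mem_ofPred_eq, NPolytope_eq_convexHull,
    ConvexCone.exists_nonneg_smul_mem_convexHull_iff_mem_hull zero_mem_NVertices]
  exact ⟨inequalities_of_mem_hull_NVertices,
    fun ⟨hu, hv⟩ => mem_hull_NVertices_of_inequalities hd hu hv⟩

/-- for `n > m ≥ 1`, `d ≥ 1`, the cone `ℝ_{≥0}·Δ` over the Newton polytope is
exactly `{x | u_i + v_j ≥ 0 for all i,j, and v_j ≥ 0 for all j}`. -/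
theorem stmt2 (n m d : ℕ) (hm : 1 ≤ m) (hnm : m < n) (hd : 1 ≤ d) :
    {x : Fin (n - 1) ⊕ Fin m → ℝ | ∃ c : ℝ, 0 ≤ c ∧ ∃ y ∈ NPolytope n m d, x = c • y}
      = {x : Fin (n - 1) ⊕ Fin m → ℝ |
          (∀ i j, 0 ≤ x (inl i) + x (inr j)) ∧ ∀ j, 0 ≤ x (inr j)} :=
  stmt2_general n m d hd
end

section
/- Let n > m ≥ 1 and d ≥ 1 be integers. With P_i, Q_j, R as before in ℝ^{n+m-1}, the convex hull Δ of {0, P_i, Q_j, R} is exactly the set of points (u_2,…,u_n,v_1,…,v_m) satisfying: u_i + v_j ≥ 0 for all i,j; v_j ≥ 0 for all j; ∑_i u_i + ∑_j v_j ≤ d; and ∑_i u_i + ∑_j v_j − (n−m)·u_{i_0} ≤ d for each 2 ≤ i_0 ≤ n. -/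
open Sum

/-- for `n > m ≥ 1`, `d ≥ 1`, the Newton polytope `Δ(f_a)` is exactly the set
cut out by `u_i + v_j ≥ 0`, `v_j ≥ 0`, `∑u + ∑v ≤ d` and
`∑u + ∑v - (n-m)·u_{i₀} ≤ d` for each `i₀`. -/
theorem stmt3 (n m d : ℕ) (hm : 1 ≤ m) (hnm : m < n) (hd : 1 ≤ d) :
    NPolytope n m d
      = {x : Fin (n - 1) ⊕ Fin m → ℝ |
          (∀ i j, 0 ≤ x (inl i) + x (inr j)) ∧ (∀ j, 0 ≤ x (inr j)) ∧
          ((∑ i, x (inl i)) + ∑ j, x (inr j)) ≤ d ∧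
          ∀ i0 : Fin (n - 1),
            ((∑ i, x (inl i)) + ∑ j, x (inr j)) - ((n : ℝ) - m) * x (inl i0) ≤ d} := by
  classical
  have hn1 : 1 ≤ n := le_of_lt (lt_of_le_of_lt hm hnm)
  have hd' : (0:ℝ) < d := by exact_mod_cast hd
  have hNcast : ((n-1 : ℕ) : ℝ) = (n:ℝ) - 1 := by
    push_cast [Nat.cast_sub hn1]
    ring
  have hmn : (m:ℝ) + 1 ≤ (n:ℝ) := by exact_mod_cast hnm
  apply Set.Subset.antisymm
  · -- hull ⊆ halfspaces
    apply convexHull_min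
    · intro y hy
      simp only [Set.mem_insert_iff, Set.mem_union, Set.mem_range] at hy
      rcases hy with rfl | rfl | ⟨i, rfl⟩ | ⟨j, rfl⟩
      · refine ⟨fun i j => by simp, fun j => by simp, by simpa using hd'.le,
          fun i0 => by simpa using hd'.le⟩
      · refine ⟨fun i j => by simp [Rpt], fun j => by simp [Rpt, hd'.le], ?_, fun i0 => ?_⟩
        · simp only [Rpt, Sum.elim_inl, Sum.elim_inr, Finset.sum_const, Finset.card_univ,
            Fintype.card_fin, nsmul_eq_mul, hNcast]
          nlinarith [mul_nonneg (by linarith : (0:ℝ) ≤ (n:ℝ) - (m:ℝ)) hd'.le]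
        · simp only [Rpt, Sum.elim_inl, Sum.elim_inr, Finset.sum_const, Finset.card_univ,
            Fintype.card_fin, nsmul_eq_mul, hNcast]
          nlinarith [hd'.le]
      · refine ⟨fun i' j => ?_, fun j => by simp [Ppt], ?_, fun i0 => ?_⟩
        · simp only [Ppt, reduceCtorEq, if_false, add_zero, Sum.inl.injEq]
          split_ifs <;> simp [hd'.le]
        · simp [Ppt, Finset.sum_ite_eq']
        · simp only [Ppt, reduceCtorEq, if_false, Sum.inl.injEq, Finset.sum_ite_eq',
            Finset.mem_univ, if_true, Finset.sum_const_zero, add_zero]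
          split_ifs with h
          · nlinarith [mul_nonneg (by linarith : (0:ℝ) ≤ (n:ℝ) - (m:ℝ)) hd'.le]
          · simp
      · refine ⟨fun i' j' => ?_, fun j' => ?_, ?_, fun i0 => ?_⟩
        · simp only [Qpt, reduceCtorEq, if_false, zero_add, Sum.inr.injEq]
          split_ifs <;> simp [hd'.le]
        · simp only [Qpt, Sum.inr.injEq]
          split_ifs <;> simp [hd'.le]
        · simp [Qpt, Finset.sum_ite_eq']
        · simp [Qpt, Finset.sum_ite_eq']
    · -- convexity of the halfspace intersection
      intro p hp q hq a b ha hb hab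
      obtain ⟨p1, p2, p3, p4⟩ := hp
      obtain ⟨q1, q2, q3, q4⟩ := hq
      have habd : a * (d:ℝ) + b * d = d := by rw [← add_mul, hab, one_mul]
      refine ⟨fun i j => ?_, fun j => ?_, ?_, fun i0 => ?_⟩
      · simp only [Pi.add_apply, Pi.smul_apply, smul_eq_mul]
        nlinarith [mul_nonneg ha (p1 i j), mul_nonneg hb (q1 i j)]
      · simp only [Pi.add_apply, Pi.smul_apply, smul_eq_mul]
        nlinarith [mul_nonneg ha (p2 j), mul_nonneg hb (q2 j)]
      · simp only [Pi.add_apply, Pi.smul_apply, smul_eq_mul, Finset.sum_add_distrib,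
          ← Finset.mul_sum]
        nlinarith [mul_le_mul_of_nonneg_left p3 ha, mul_le_mul_of_nonneg_left q3 hb, habd]
      · simp only [Pi.add_apply, Pi.smul_apply, smul_eq_mul, Finset.sum_add_distrib,
          ← Finset.mul_sum]
        nlinarith [mul_le_mul_of_nonneg_left (p4 i0) ha, mul_le_mul_of_nonneg_left (q4 i0) hb,
          habd]
  · -- halfspaces ⊆ hull
    intro x hx
    obtain ⟨h1, h2, h3, h4⟩ := hx
    have hne : (Finset.univ : Finset (Fin (n-1))).Nonempty := ⟨⟨0, by omega⟩, Finset.mem_univ _⟩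
    obtain ⟨i0, -, hmin⟩ := Finset.exists_min_image Finset.univ (fun i => x (inl i)) hne
    set r : ℝ := max 0 (-(x (inl i0))) with hrdef
    have hr0 : 0 ≤ r := le_max_left _ _
    have hra : ∀ i, 0 ≤ x (inl i) + r := by
      intro i
      have h := le_max_right 0 (-(x (inl i0)))
      have := hmin i (Finset.mem_univ i)
      simp only [← hrdef] at h
      linarith
    have hrb : ∀ j, 0 ≤ x (inr j) - r := by
      intro j
      have : r ≤ x (inr j) := max_le (h2 j) (by linarith [h1 i0 j])
      linarith
    have hre : 0 ≤ (d:ℝ) - ((∑ i, x (inl i)) + ∑ j, x (inr j)) - ((n:ℝ) - m) * r := by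
      rcases max_choice 0 (-(x (inl i0))) with h | h <;> rw [hrdef, h]
      · linarith [h3]
      · linarith [h4 i0]
    let w : (Fin (n-1) ⊕ Fin m) ⊕ Bool → ℝ :=
      fun ι => match ι with
        | .inl (.inl i) => x (inl i) + r
        | .inl (.inr j) => x (inr j) - r
        | .inr true => r
        | .inr false => (d:ℝ) - ((∑ i, x (inl i)) + ∑ j, x (inr j)) - ((n:ℝ) - m) * r
    let z : (Fin (n-1) ⊕ Fin m) ⊕ Bool → (Fin (n-1) ⊕ Fin m → ℝ) :=
      fun ι => match ι with
        | .inl (.inl i) => Ppt n m d i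
        | .inl (.inr j) => Qpt n m d j
        | .inr true => Rpt n m d
        | .inr false => 0
    have hw : ∀ ι ∈ (Finset.univ : Finset ((Fin (n-1) ⊕ Fin m) ⊕ Bool)), 0 ≤ w ι := by
      rintro ((i | j) | (_ | _)) -
      · exact hra i
      · exact hrb j
      · exact hre
      · exact hr0
    have hsum : ∑ ι, w ι = (d:ℝ) := by
      simp only [w, Fintype.sum_sum_type, Fintype.sum_bool, Finset.sum_add_distrib,
        Finset.sum_sub_distrib, Finset.sum_const, Finset.card_univ, Fintype.card_fin,
        nsmul_eq_mul, hNcast]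
      ring
    have hz : ∀ ι ∈ (Finset.univ : Finset ((Fin (n-1) ⊕ Fin m) ⊕ Bool)),
        z ι ∈ (insert 0 (insert (Rpt n m d)
          (Set.range (Ppt n m d) ∪ Set.range (Qpt n m d))) : Set (Fin (n-1) ⊕ Fin m → ℝ)) := by
      rintro ((i | j) | (_ | _)) -
      · exact Set.mem_insert_iff.2 (Or.inr (Set.mem_insert_iff.2 (Or.inr (Or.inl ⟨i, rfl⟩))))
      · exact Set.mem_insert_iff.2 (Or.inr (Set.mem_insert_iff.2 (Or.inr (Or.inr ⟨j, rfl⟩))))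
      · exact Set.mem_insert_iff.2 (Or.inl rfl)
      · exact Set.mem_insert_iff.2 (Or.inr (Set.mem_insert_iff.2 (Or.inl rfl)))
    have hmem := Finset.centerMass_mem_convexHull Finset.univ hw (by rw [hsum]; exact hd') hz
    have hxeq : Finset.univ.centerMass w z = x := by
      rw [Finset.centerMass, hsum, inv_smul_eq_iff₀ hd'.ne']
      funext k
      simp only [Finset.sum_apply, Pi.smul_apply, smul_eq_mul, Fintype.sum_sum_type,
        Fintype.sum_bool]
      cases k with
      | inl i =>
        simp only [w, z, Ppt, Qpt, Rpt, Sum.elim_inl, Sum.inl.injEq, reduceCtorEq, if_false,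
          mul_zero, mul_ite, Finset.sum_const_zero, Pi.zero_apply, Pi.smul_apply, smul_eq_mul]
        rw [Finset.sum_ite_eq Finset.univ i (fun i' => (x (inl i') + r) * d)]
        simp only [Finset.mem_univ, if_true]
        ring
      | inr j =>
        simp only [w, z, Ppt, Qpt, Rpt, Sum.elim_inr, Sum.inr.injEq, reduceCtorEq, if_false,
          mul_zero, mul_ite, Finset.sum_const_zero, Pi.zero_apply, Pi.smul_apply, smul_eq_mul]
        rw [Finset.sum_ite_eq Finset.univ j (fun j' => (x (inr j') - r) * d)]
        simp only [Finset.mem_univ, if_true]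
        ring
    show x ∈ convexHull ℝ _
    rw [← hxeq]
    exact hmem
end

section
/- Let n = m ≥ 1 and d ≥ 1 be integers. With P_i = d·e_{u_i} (2 ≤ i ≤ n), Q_j = d·e_{v_j} (1 ≤ j ≤ n), and R = (−d,…,−d,d,…,d) in ℝ^{2n-1}, the convex hull Δ of {0, P_i, Q_j, R} is exactly the set of points satisfying u_i + v_j ≥ 0 for all i,j, v_j ≥ 0 for all j, and ∑_i u_i + ∑_j v_j ≤ d. Moreover all points P_i, Q_j, R lie on the hyperplane ∑_i u_i + ∑_j v_j = d. -/
/-!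
The vertices satisfy the inequalities, which cut out a convex set; this gives `⊆`.
Conversely, for `x` satisfying them put `μ = minⱼ vⱼ ≥ 0` and `y = x - (μ / d) • R`, whose
coordinates `uᵢ + μ` and `vⱼ - μ` are nonnegative. Then `x = (μ / d) • R + ∑ₖ (yₖ / d) • d eₖ`,
and since there is one more `v` than `u`, the coordinates of `R` sum to `d`, so the weights sum to
`(∑ u + ∑ v) / d ≤ 1`; the remaining weight goes to the vertex `0`.
-/

open Sum

theorem Convex.sum_mem_of_zero_mem {R E ι : Type*} [Field R] [LinearOrder R] [IsStrictOrderedRing R]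
    [AddCommGroup E] [Module R E] {s : Set E} (hs : Convex R s) (h₀ : (0 : E) ∈ s)
    {t : Finset ι} {w : ι → R} {z : ι → E} (hw₀ : ∀ i ∈ t, 0 ≤ w i) (hw₁ : ∑ i ∈ t, w i ≤ 1)
    (hz : ∀ i ∈ t, z i ∈ s) : ∑ i ∈ t, w i • z i ∈ s := by
  rcases (Finset.sum_nonneg hw₀).eq_or_lt with hw | hw
  · have hw_zero := (Finset.sum_eq_zero_iff_of_nonneg hw₀).1 hw.symm
    rwa [Finset.sum_eq_zero fun i hi => by rw [hw_zero i hi, zero_smul]]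
  · have := hs.smul_mem_of_zero_mem h₀ (hs.centerMass_mem hw₀ hw hz) ⟨hw.le, hw₁⟩
    rwa [Finset.centerMass, smul_inv_smul₀ hw.ne'] at this

def NHalfspaces (n m d : ℕ) : Set (Fin (n - 1) ⊕ Fin m → ℝ) :=
  {x | (∀ i j, 0 ≤ x (inl i) + x (inr j)) ∧ (∀ j, 0 ≤ x (inr j)) ∧
    ((∑ i, x (inl i)) + ∑ j, x (inr j)) ≤ d}

section

variable {n m d : ℕ}

theorem Ppt_eq_single (i : Fin (n - 1)) : Ppt n m d i = Pi.single (inl i) (d : ℝ) := by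
  funext k
  simp [Ppt, Pi.single_apply]

theorem Qpt_eq_single (j : Fin m) : Qpt n m d j = Pi.single (inr j) (d : ℝ) := by
  funext k
  simp [Qpt, Pi.single_apply]

theorem sum_Ppt (i : Fin (n - 1)) : ∑ k, Ppt n m d i k = d := by
  rw [Ppt_eq_single, Fintype.sum_pi_single']

theorem sum_Qpt (j : Fin m) : ∑ k, Qpt n m d j k = d := by
  rw [Qpt_eq_single, Fintype.sum_pi_single']

theorem sum_Rpt : ∑ k, Rpt n m d k = ((m : ℝ) - (n - 1 : ℕ)) * d := by
  simp only [Rpt, Fintype.sum_sum_type, elim_inl, elim_inr, Finset.sum_neg_distrib,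
    Finset.sum_const, Finset.card_univ, Fintype.card_fin, nsmul_eq_mul]
  ring

theorem convex_NHalfspaces : Convex ℝ (NHalfspaces n m d) := by
  rintro x ⟨hx_uv, hx_v, hx_sum⟩ y ⟨hy_uv, hy_v, hy_sum⟩ a b ha hb hab
  refine ⟨fun i j => ?_, fun j => ?_, ?_⟩ <;>
    simp only [Pi.add_apply, Pi.smul_apply, smul_eq_mul, Finset.sum_add_distrib, ← Finset.mul_sum]
  · linarith [mul_nonneg ha (hx_uv i j), mul_nonneg hb (hy_uv i j)]
  · linarith [mul_nonneg ha (hx_v j), mul_nonneg hb (hy_v j)]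
  · nlinarith [mul_le_mul_of_nonneg_left hx_sum ha, mul_le_mul_of_nonneg_left hy_sum hb]

theorem mem_NHalfspaces_of_nonneg {x : Fin (n - 1) ⊕ Fin m → ℝ} (hx : 0 ≤ x)
    (hx_sum : ∑ k, x k ≤ d) : x ∈ NHalfspaces n m d :=
  ⟨fun _ _ => add_nonneg (hx _) (hx _), fun _ => hx _, (Fintype.sum_sum_type x).ge.trans hx_sum⟩

theorem Rpt_mem_NHalfspaces (hm : m ≤ n - 1 + 1) : Rpt n m d ∈ NHalfspaces n m d := by
  refine ⟨fun _ _ => by simp [Rpt], fun _ => by simp [Rpt], ?_⟩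
  have hm' : (m : ℝ) - (n - 1 : ℕ) ≤ 1 := by
    rw [sub_le_iff_le_add']; exact_mod_cast hm
  rw [← Fintype.sum_sum_type, sum_Rpt]
  simpa using mul_le_mul_of_nonneg_right hm' d.cast_nonneg

theorem NPolytope_subset_NHalfspaces (hm : m ≤ n - 1 + 1) :
    NPolytope n m d ⊆ NHalfspaces n m d := by
  have single_mem (k : Fin (n - 1) ⊕ Fin m) : Pi.single k (d : ℝ) ∈ NHalfspaces n m d :=
    mem_NHalfspaces_of_nonneg (Pi.single_nonneg.2 d.cast_nonneg) (Fintype.sum_pi_single' _ _).le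
  refine convexHull_min ?_ convex_NHalfspaces
  rintro x (rfl | rfl | ⟨i, rfl⟩ | ⟨j, rfl⟩)
  · exact mem_NHalfspaces_of_nonneg le_rfl (by simp)
  · exact Rpt_mem_NHalfspaces hm
  · exact Ppt_eq_single i ▸ single_mem _
  · exact Qpt_eq_single j ▸ single_mem _

theorem smul_Rpt_add_smul_mem_NPolytope {a : ℝ} {b : Fin (n - 1) ⊕ Fin m → ℝ} (ha : 0 ≤ a)
    (hb : 0 ≤ b) (hab : a + ∑ k, b k ≤ 1) : a • Rpt n m d + (d : ℝ) • b ∈ NPolytope n m d := by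
  let w : Option (Fin (n - 1) ⊕ Fin m) → ℝ := fun o => o.elim a b
  let z : Option (Fin (n - 1) ⊕ Fin m) → Fin (n - 1) ⊕ Fin m → ℝ :=
    fun o => o.elim (Rpt n m d) fun k => Pi.single k (d : ℝ)
  have hdb : (d : ℝ) • b = ∑ k, b k • Pi.single k (d : ℝ) := by
    funext k
    simp [Finset.sum_apply, Pi.single_apply, mul_comm]
  have hmem : ∑ o, w o • z o ∈ NPolytope n m d := by
    refine (convex_convexHull ℝ _).sum_mem_of_zero_mem
      (subset_convexHull ℝ _ (Set.mem_insert _ _)) ?_ ?_ ?_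
    · rintro (_ | k) -
      exacts [ha, hb k]
    · rwa [Fintype.sum_option]
    · rintro (_ | i | j) -
      · exact subset_convexHull ℝ _ (Set.mem_insert_of_mem _ (Set.mem_insert _ _))
      · exact subset_convexHull ℝ _
          (Set.mem_insert_of_mem _ (Set.mem_insert_of_mem _ (.inl ⟨i, Ppt_eq_single i⟩)))
      · exact subset_convexHull ℝ _
          (Set.mem_insert_of_mem _ (Set.mem_insert_of_mem _ (.inr ⟨j, Qpt_eq_single j⟩)))
  rw [hdb]
  rwa [Fintype.sum_option] at hmem

theorem NHalfspaces_subset_NPolytope (hm : n - 1 + 1 = m) (hd : 0 < d) :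
    NHalfspaces n m d ⊆ NPolytope n m d := by
  rintro x ⟨hx_uv, hx_v, hx_sum⟩
  have : Nonempty (Fin m) := ⟨⟨0, by omega⟩⟩
  obtain ⟨j₀, hj₀⟩ := Finite.exists_min fun j => x (inr j)
  have hd' : (0 : ℝ) < d := Nat.cast_pos.2 hd
  set a : ℝ := x (inr j₀) / d
  set b := (d : ℝ)⁻¹ • (x - a • Rpt n m d)
  have hx_eq : x = a • Rpt n m d + (d : ℝ) • b := by
    rw [smul_inv_smul₀ hd'.ne', add_sub_cancel]
  rw [hx_eq]
  refine smul_Rpt_add_smul_mem_NPolytope (div_nonneg (hx_v j₀) hd'.le) ?_ ?_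
  · rintro (i | j)
    · simpa [b, a, Rpt, hd'.ne'] using mul_nonneg (inv_nonneg.2 hd'.le) (hx_uv i j₀)
    · simpa [b, a, Rpt, hd'.ne'] using mul_nonneg (inv_nonneg.2 hd'.le) (sub_nonneg.2 (hj₀ j))
  · have hR_sum : ∑ k, Rpt n m d k = d := by
      rw [sum_Rpt, ← hm]
      push_cast
      ring
    calc a + ∑ k, b k = (∑ k, x k) / d := by
          simp only [b, Pi.smul_apply, Pi.sub_apply, smul_eq_mul, ← Finset.mul_sum,
            Finset.sum_sub_distrib, hR_sum]
          field_simp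
          ring
      _ ≤ 1 := (div_le_one hd').2 ((Fintype.sum_sum_type x).trans_le hx_sum)

end

/-- for `n = m ≥ 1`, `d ≥ 1`, the Newton polytope is cut out by
`u_i + v_j ≥ 0`, `v_j ≥ 0` and `∑u + ∑v ≤ d`; moreover all the points `P_i`, `Q_j`, `R`
lie on the hyperplane `∑u + ∑v = d`. -/
theorem stmt4 (n d : ℕ) (hn : 1 ≤ n) (hd : 1 ≤ d) :
    (NPolytope n n d
      = {x : Fin (n - 1) ⊕ Fin n → ℝ |
          (∀ i j, 0 ≤ x (inl i) + x (inr j)) ∧ (∀ j, 0 ≤ x (inr j)) ∧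
          ((∑ i, x (inl i)) + ∑ j, x (inr j)) ≤ d})
    ∧ (∀ i : Fin (n - 1),
        (∑ k, Ppt n n d i (inl k)) + ∑ j, Ppt n n d i (inr j) = d)
    ∧ (∀ j0 : Fin n,
        (∑ k, Qpt n n d j0 (inl k)) + ∑ j, Qpt n n d j0 (inr j) = d)
    ∧ ((∑ k, Rpt n n d (inl k)) + ∑ j, Rpt n n d (inr j) = d) := by
  have hn' : n - 1 + 1 = n := Nat.sub_add_cancel hn
  refine ⟨(NPolytope_subset_NHalfspaces hn'.ge).antisymm (NHalfspaces_subset_NPolytope hn' hd),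
    fun i => ?_, fun j => ?_, ?_⟩ <;> rw [← Fintype.sum_sum_type]
  · exact sum_Ppt i
  · exact sum_Qpt j
  · rw [sum_Rpt, Nat.cast_sub hn]
    ring
end

section
/- Let n > m ≥ 0 and d ≥ 1 be integers, and a ∈ ℂ×. The Euclidean volume of the Newton polytope Δ(f_a) ⊂ ℝ^{n+m-1} of the Laurent polynomial f_a = ∑_{i=2}^n x_i^d − ∑_{j=1}^m y_j^d + a ∏_j y_j^d / ∏_i x_i^d equals d^{n+m-1} · n / (n+m−1)!. -/
/-!
Scaling by `d` reduces everything to `d = 1`, where the polytope is `conv(0, e_k, r)` with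
`r = (-1, …, -1, 1, …, 1)`. Because `∑ r ≤ 1`, the point `r` sees exactly the facets `x_k = 0`
(`r_k < 0`) of the corner simplex `conv(0, e_k)`, so the polytope is the corner simplex together
with the pyramids of apex `r` over these facets, and these pieces overlap only inside hyperplanes.
A simplex with a vertex at the origin has volume `|det| / N!`; this gives `1 / N!` for the corner
simplex and `|r_k| / N!` for the pyramid over the facet `x_k = 0`. Here `r` has `n - 1` negative
coordinates, whence the volume `n / N!`, and `d ^ N` times that before rescaling.
-/

open Sum

open MeasureTheory Set
open scoped Nat Pointwise

def cornerSimplex (ι : Type*) [Fintype ι] (c : ℝ) : Set (ι → ℝ) :=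
  {x | 0 ≤ x ∧ ∑ i, x i ≤ c}

section cornerSimplex

variable {ι : Type*} [Fintype ι]

lemma isClosed_cornerSimplex (c : ℝ) : IsClosed (cornerSimplex ι c) :=
  isClosed_Ici.inter <| isClosed_le (continuous_finsetSum _ fun i _ ↦ continuous_apply i)
    continuous_const

lemma convex_cornerSimplex (c : ℝ) : Convex ℝ (cornerSimplex ι c) :=
  (convex_Ici 0).inter <| convex_halfSpace_le
    ⟨fun _ _ ↦ Finset.sum_add_distrib, fun _ _ ↦ (Finset.mul_sum _ _ _).symm⟩ c

lemma cons_mem_cornerSimplex_iff {N : ℕ} {c t : ℝ} {y : Fin N → ℝ} :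
    (Fin.cons t y : Fin (N + 1) → ℝ) ∈ cornerSimplex (Fin (N + 1)) c ↔
      0 ≤ t ∧ y ∈ cornerSimplex (Fin N) (c - t) := by
  simp only [cornerSimplex, mem_ofPred_eq, Fin.sum_univ_succ, Fin.cons_zero, Fin.cons_succ,
    Pi.le_def, Fin.forall_fin_succ, Pi.zero_apply, le_sub_iff_add_le', and_assoc]

lemma lintegral_Icc_sub_pow_div_factorial {c : ℝ} (hc : 0 ≤ c) (N : ℕ) :
    ∫⁻ t in Icc 0 c, ENNReal.ofReal ((c - t) ^ N / N !) =
      ENNReal.ofReal (c ^ (N + 1) / (N + 1)!) := by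
  have hcont : Continuous fun t : ℝ ↦ (c - t) ^ N / N ! := by fun_prop
  rw [← ofReal_integral_eq_lintegral_ofReal hcont.integrableOn_Icc
    ((ae_restrict_iff' measurableSet_Icc).2 (.of_forall fun t ht ↦ by
      have := ht.2; positivity)), integral_Icc_eq_integral_Ioc,
    ← intervalIntegral.integral_of_le hc, intervalIntegral.integral_div,
    intervalIntegral.integral_comp_sub_left (· ^ N) c, sub_self, sub_zero, integral_pow,
    zero_pow N.succ_ne_zero, sub_zero, div_div, Nat.factorial_succ, Nat.cast_mul, Nat.cast_succ]

lemma volume_cornerSimplex_fin (N : ℕ) (c : ℝ) :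
    volume (cornerSimplex (Fin N) c) = if 0 ≤ c then ENNReal.ofReal (c ^ N / N !) else 0 := by
  induction N generalizing c with
  | zero =>
    split_ifs with hc
    · have : cornerSimplex (Fin 0) c = univ := by ext x; simp [cornerSimplex, hc]
      simp [this, volume_pi]
    · have : cornerSimplex (Fin 0) c = ∅ := by ext x; simp [cornerSimplex, hc]
      simp [this]
  | succ N ih =>
    set e := MeasurableEquiv.piFinSuccAbove (fun _ : Fin (N + 1) ↦ ℝ) 0
    have hcons : MeasurePreserving e.symm := (volume_preserving_piFinSuccAbove _ 0).symm
    have hslice (t : ℝ) : volume (Prod.mk t ⁻¹' (e.symm ⁻¹' cornerSimplex _ c)) =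
        (Icc 0 c).indicator (fun t ↦ ENNReal.ofReal ((c - t) ^ N / N !)) t := by
      have hpre : Prod.mk t ⁻¹' (e.symm ⁻¹' cornerSimplex _ c) =
          {y | 0 ≤ t ∧ y ∈ cornerSimplex (Fin N) (c - t)} := by
        ext y
        rw [mem_preimage, mem_preimage, show e.symm (t, y) = Fin.cons t y from
          Fin.insertNth_zero' t y, cons_mem_cornerSimplex_iff, mem_ofPred_eq]
      by_cases ht : 0 ≤ t
      · simp [hpre, ht, ih, indicator_apply, sub_nonneg]
      · simp [hpre, ht]
    rw [← hcons.measure_preimage (isClosed_cornerSimplex c).measurableSet.nullMeasurableSet,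
      Measure.volume_eq_prod, Measure.prod_apply
        ((isClosed_cornerSimplex c).measurableSet.preimage e.symm.measurable)]
    simp_rw [hslice]
    rw [lintegral_indicator measurableSet_Icc]
    split_ifs with hc
    · exact lintegral_Icc_sub_pow_div_factorial hc N
    · simp [Icc_eq_empty hc]

lemma piCongrLeft_preimage_cornerSimplex {κ : Type*} [Fintype κ] (f : κ ≃ ι) (c : ℝ) :
    MeasurableEquiv.piCongrLeft (fun _ ↦ ℝ) f ⁻¹' cornerSimplex ι c = cornerSimplex κ c := by
  ext y
  have happly (i : ι) : MeasurableEquiv.piCongrLeft (fun _ ↦ ℝ) f y i = y (f.symm i) := by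
    simp [MeasurableEquiv.coe_piCongrLeft, Equiv.piCongrLeft_apply_eq_cast]
  simp only [mem_preimage, cornerSimplex, mem_ofPred_eq, Pi.le_def, Pi.zero_apply, happly,
    f.forall_congr_left, f.symm.sum_comp]

lemma volume_cornerSimplex {c : ℝ} (hc : 0 ≤ c) :
    volume (cornerSimplex ι c) = ENNReal.ofReal (c ^ Fintype.card ι / (Fintype.card ι)!) := by
  have hf := volume_measurePreserving_piCongrLeft (fun _ ↦ ℝ) (Fintype.equivFin ι).symm
  rw [← hf.measure_preimage (isClosed_cornerSimplex c).measurableSet.nullMeasurableSet,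
    piCongrLeft_preimage_cornerSimplex, volume_cornerSimplex_fin, if_pos hc]

variable [DecidableEq ι]

lemma convexHull_insert_zero_single_eq_cornerSimplex :
    convexHull ℝ (insert 0 (range fun i ↦ (Pi.single i 1 : ι → ℝ))) = cornerSimplex ι 1 := by
  refine (convexHull_min ?_ (convex_cornerSimplex 1)).antisymm fun x ⟨hx0, hx1⟩ ↦ ?_
  · rintro _ (rfl | ⟨i, rfl⟩)
    · simp [cornerSimplex]
    · simp [cornerSimplex, Pi.single_nonneg]
  · refine mem_convexHull_of_exists_fintype (fun o : Option ι ↦ o.elim (1 - ∑ i, x i) x)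
      (fun o : Option ι ↦ o.elim 0 fun i ↦ Pi.single i 1) ?_ ?_ ?_ ?_
    · rintro (_ | i)
      · simpa using hx1
      · exact hx0 i
    · simp [Fintype.sum_option]
    · rintro (_ | i)
      · exact mem_insert _ _
      · exact mem_insert_of_mem _ ⟨i, rfl⟩
    · ext j
      simp [Fintype.sum_option, Pi.single_apply]

end cornerSimplex

lemma convexHull_insert_zero_range_eq_image {ι E : Type*} [Fintype ι] [DecidableEq ι]
    [AddCommGroup E] [Module ℝ E] (w : ι → E) :
    convexHull ℝ (insert 0 (range w)) = Fintype.linearCombination ℝ w '' cornerSimplex ι 1 := by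
  rw [← convexHull_insert_zero_single_eq_cornerSimplex, LinearMap.image_convexHull,
    image_insert_eq, map_zero, ← range_comp]
  congr
  funext i
  simp

lemma volume_convexHull_insert_zero_range {ι : Type*} [Fintype ι] [DecidableEq ι]
    (w : ι → ι → ℝ) :
    volume (convexHull ℝ (insert 0 (range w))) =
      ENNReal.ofReal (|(Matrix.of w).det| / (Fintype.card ι)!) := by
  have hmatrix : LinearMap.toMatrix' (Fintype.linearCombination ℝ w) = (Matrix.of w).transpose := by
    ext i j
    simp [LinearMap.toMatrix'_apply]
  rw [convexHull_insert_zero_range_eq_image, Measure.addHaar_image_linearMap,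
    volume_cornerSimplex zero_le_one, ← LinearMap.det_toMatrix', hmatrix, Matrix.det_transpose,
    one_pow, ← ENNReal.ofReal_mul (abs_nonneg _), mul_one_div]

lemma Matrix.det_updateRow_one {ι R : Type*} [Fintype ι] [DecidableEq ι] [CommRing R]
    (k : ι) (r : ι → R) : ((1 : Matrix ι ι R).updateRow k r).det = r k := by
  have hr : ∑ j, r j • (1 : Matrix ι ι R) j = r := by
    ext i
    simp [Matrix.one_apply]
  simpa [hr] using Matrix.det_updateRow_sum 1 k r

lemma aedisjoint_of_subset_halfSpaces {E : Type*} [NormedAddCommGroup E] [NormedSpace ℝ E]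
    [MeasurableSpace E] [BorelSpace E] [FiniteDimensional ℝ E] (μ : Measure E)
    [μ.IsAddHaarMeasure] {f : E →ₗ[ℝ] ℝ} (hf : f ≠ 0) {A B : Set E}
    (hA : A ⊆ {x | f x ≤ 0}) (hB : B ⊆ {x | 0 ≤ f x}) : AEDisjoint μ A B :=
  measure_mono_null (fun _ hx ↦ LinearMap.mem_ker.2 (le_antisymm (hA hx.1) (hB hx.2)))
    (Measure.addHaar_submodule μ _ fun h ↦ hf (LinearMap.ker_eq_top.1 h))

section facetPyramid

variable {ι : Type*} [Fintype ι] [DecidableEq ι] (r : ι → ℝ)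

/-- `conv(0, r, e_j (j ≠ k))`: the pyramid with apex `r` over the facet `x k = 0` of
`cornerSimplex ι 1`. -/
def facetPyramid (k : ι) : Set (ι → ℝ) :=
  convexHull ℝ (insert 0 (range (Function.update (fun i ↦ Pi.single i 1) k r)))

lemma linearCombination_update_single (k : ι) (c : ι → ℝ) :
    Fintype.linearCombination ℝ (Function.update (fun i ↦ Pi.single i 1) k r) c =
      c k • r + Function.update c k 0 := by
  ext j
  rw [Fintype.linearCombination_apply, Finset.sum_apply, Fintype.sum_eq_add_sum_compl k]
  have hrest : ∀ i ∈ ({k}ᶜ : Finset ι),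
      (c i • Function.update (fun i ↦ (Pi.single i 1 : ι → ℝ)) k r i) j =
        if j = i then c i else 0 := by
    intro i hi
    rw [Function.update_of_ne (by simpa using hi)]
    simp [Pi.single_apply]
  rw [Finset.sum_congr rfl hrest, Finset.sum_ite_eq]
  by_cases h : j = k <;> simp [h]

lemma facetPyramid_eq_image (k : ι) :
    facetPyramid r k = (fun c ↦ c k • r + Function.update c k 0) '' cornerSimplex ι 1 := by
  rw [facetPyramid, convexHull_insert_zero_range_eq_image]
  congr 1
  funext c
  exact linearCombination_update_single r k c

lemma volume_facetPyramid (k : ι) :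
    volume (facetPyramid r k) = ENNReal.ofReal (|r k| / (Fintype.card ι)!) := by
  have hmatrix : Matrix.of (Function.update (fun i ↦ Pi.single i 1) k r) =
      (1 : Matrix ι ι ℝ).updateRow k r := by
    ext i j
    by_cases h : i = k <;>
      simp [h, Matrix.updateRow_apply, Matrix.one_apply, Pi.single_apply, eq_comm]
  rw [facetPyramid, volume_convexHull_insert_zero_range, hmatrix, Matrix.det_updateRow_one]

variable {r}

lemma facetPyramid_subset_apply_nonpos {k : ι} (hk : r k ≤ 0) :
    facetPyramid r k ⊆ {x | x k ≤ 0} := by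
  rw [facetPyramid_eq_image]
  rintro _ ⟨c, ⟨hc, -⟩, rfl⟩
  simpa using mul_nonpos_of_nonneg_of_nonpos (hc k) hk

lemma facetPyramid_subset_mul_le {j k : ι} (hjk : j ≠ k) (hk : r k ≤ 0) :
    facetPyramid r k ⊆ {x | x j * r k ≤ x k * r j} := by
  rw [facetPyramid_eq_image]
  rintro _ ⟨c, ⟨hc, -⟩, rfl⟩
  simp only [mem_ofPred_eq, Pi.add_apply, Pi.smul_apply, smul_eq_mul, Function.update_of_ne hjk,
    Function.update_self, add_zero]
  nlinarith [mul_nonpos_of_nonneg_of_nonpos (hc j) hk]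

lemma smul_add_mem_facetPyramid {k : ι} {t : ℝ} {y : ι → ℝ} (ht : 0 ≤ t) (hy : 0 ≤ y)
    (hyk : y k = 0) (hsum : t + ∑ i, y i ≤ 1) : t • r + y ∈ facetPyramid r k := by
  rw [facetPyramid_eq_image]
  refine ⟨y + Pi.single k t, ⟨add_nonneg hy (Pi.single_nonneg.2 ht), ?_⟩, ?_⟩
  · simpa [Finset.sum_add_distrib, add_comm] using hsum
  · ext i
    by_cases h : i = k <;> simp [h, hyk]

lemma aedisjoint_cornerSimplex_facetPyramid {k : ι} (hk : r k < 0) :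
    AEDisjoint volume (cornerSimplex ι 1) (facetPyramid r k) := by
  refine (aedisjoint_of_subset_halfSpaces volume (f := LinearMap.proj k) ?_
    (facetPyramid_subset_apply_nonpos hk.le) fun x hx ↦ hx.1 k).symm
  intro h
  simpa using LinearMap.congr_fun h (Pi.single k 1)

lemma aedisjoint_facetPyramid {j k : ι} (hj : r j < 0) (hk : r k < 0) (hjk : j ≠ k) :
    AEDisjoint volume (facetPyramid r k) (facetPyramid r j) := by
  refine aedisjoint_of_subset_halfSpaces volume
    (f := r k • LinearMap.proj j - r j • LinearMap.proj k) ?_ (fun x hx ↦ ?_) (fun x hx ↦ ?_)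
  · intro h
    simpa [hjk, hk.ne] using LinearMap.congr_fun h (Pi.single j 1)
  · have : x j * r k ≤ x k * r j := facetPyramid_subset_mul_le hjk hk.le hx
    show r k * x j - r j * x k ≤ 0
    linarith
  · have : x k * r j ≤ x j * r k := facetPyramid_subset_mul_le hjk.symm hj.le hx
    show 0 ≤ r k * x j - r j * x k
    linarith

lemma smul_add_mem_cornerSimplex_union_facetPyramid (hr : ∑ i, r i ≤ 1) {a : ℝ} {z : ι → ℝ}
    (ha : 0 ≤ a) (hz : 0 ≤ z) (hsum : a + ∑ i, z i ≤ 1) :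
    a • r + z ∈ cornerSimplex ι 1 ∪ ⋃ k ∈ ({k | r k < 0} : Finset ι), facetPyramid r k := by
  set x := a • r + z
  have hxi (i : ι) : x i = a * r i + z i := rfl
  have hzi (i : ι) : 0 ≤ z i := hz i
  by_cases hx0 : 0 ≤ x
  · refine Or.inl ⟨hx0, ?_⟩
    have : ∑ i, x i = a * ∑ i, r i + ∑ i, z i := by
      simp [hxi, Finset.sum_add_distrib, Finset.mul_sum]
    nlinarith
  obtain ⟨j, hj⟩ : ∃ j, x j < 0 := by simpa [Pi.le_def] using hx0
  have hrj : r j < 0 := by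
    by_contra! h
    nlinarith [hxi j, hzi j, mul_nonneg ha h]
  -- Subtract from `x` the largest multiple `t • r` keeping it nonnegative; its `k`-th
  -- coordinate then vanishes.
  obtain ⟨k, hk, hmax⟩ := Finset.exists_max_image ({k | r k < 0} : Finset ι)
    (fun k ↦ x k / r k) ⟨j, by simpa using hrj⟩
  simp only [Finset.mem_filter, Finset.mem_univ, true_and] at hk hmax
  set t := x k / r k
  have ht : 0 < t := (div_pos_of_neg_of_neg hj hrj).trans_le (hmax j hrj)
  have hta : t ≤ a := by
    rw [div_le_iff_of_neg hk, hxi]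
    nlinarith [hzi k]
  refine Or.inr (mem_iUnion₂.2 ⟨k, by simpa using hk, ?_⟩)
  rw [show x = t • r + (x - t • r) by abel]
  refine smul_add_mem_facetPyramid ht.le (fun i ↦ ?_) ?_ ?_
  · simp only [Pi.zero_apply, Pi.sub_apply, Pi.smul_apply, smul_eq_mul, sub_nonneg]
    rcases lt_or_ge (r i) 0 with hri | hri
    · exact (div_le_iff_of_neg hri).1 (hmax i hri)
    · nlinarith [hxi i, hzi i]
  · simp [t, div_mul_cancel₀ _ hk.ne]
  · have : ∑ i, (x - t • r) i = (a - t) * ∑ i, r i + ∑ i, z i := by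
      simp only [Pi.sub_apply, Pi.smul_apply, smul_eq_mul, hxi, Finset.sum_sub_distrib,
        Finset.sum_add_distrib, ← Finset.mul_sum]
      ring
    nlinarith [mul_le_mul_of_nonneg_left hr (sub_nonneg.2 hta)]

lemma convexHull_insert_zero_insert_eq_union (hr : ∑ i, r i ≤ 1) :
    convexHull ℝ (insert 0 (insert r (range fun i ↦ (Pi.single i 1 : ι → ℝ)))) =
      cornerSimplex ι 1 ∪ ⋃ k ∈ ({k | r k < 0} : Finset ι), facetPyramid r k := by
  refine subset_antisymm ?_ (union_subset ?_ (iUnion₂_subset fun k _ ↦ convexHull_mono ?_))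
  · rw [insert_comm, convexHull_insert (insert_nonempty _ _),
      convexHull_insert_zero_single_eq_cornerSimplex, convexJoin_singleton_left]
    intro x hx
    obtain ⟨y, ⟨hy0, hy1⟩, a, b, ha, hb, hab, rfl⟩ := mem_iUnion₂.1 hx
    refine smul_add_mem_cornerSimplex_union_facetPyramid hr ha (smul_nonneg hb hy0) ?_
    simp only [Pi.smul_apply, smul_eq_mul, ← Finset.mul_sum]
    nlinarith
  · rw [← convexHull_insert_zero_single_eq_cornerSimplex]
    exact convexHull_mono (insert_subset_insert (subset_insert _ _))
  · refine insert_subset_insert (range_subset_iff.2 fun i ↦ ?_)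
    by_cases h : i = k <;> simp [h]

theorem volume_convexHull_insert_zero_insert (hr : ∑ i, r i ≤ 1) :
    volume (convexHull ℝ (insert 0 (insert r (range fun i ↦ (Pi.single i 1 : ι → ℝ))))) =
      ENNReal.ofReal ((1 + ∑ i, (r i)⁻) / (Fintype.card ι)!) := by
  have hmeas (k : ι) : MeasurableSet (facetPyramid r k) :=
    ((finite_range _).insert 0).isCompact_convexHull ℝ |>.isClosed.measurableSet
  rw [convexHull_insert_zero_insert_eq_union hr, measure_union₀
      (Finset.measurableSet_biUnion _ fun k _ ↦ hmeas k).nullMeasurableSet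
      (AEDisjoint.iUnion_right_iff.2 fun k ↦ AEDisjoint.iUnion_right_iff.2 fun hk ↦
        aedisjoint_cornerSimplex_facetPyramid (by simpa using hk)),
    measure_biUnion_finset₀ (fun j hj k hk hjk ↦ aedisjoint_facetPyramid (by simpa using hk)
        (by simpa using hj) hjk.symm) fun k _ ↦ (hmeas k).nullMeasurableSet,
    volume_cornerSimplex zero_le_one, one_pow]
  simp_rw [volume_facetPyramid]
  rw [← ENNReal.ofReal_sum_of_nonneg fun k _ ↦ by positivity, ← ENNReal.ofReal_add (by positivity)
    (Finset.sum_nonneg fun k _ ↦ by positivity), ← Finset.sum_div, ← add_div, Finset.sum_filter]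
  congr 3
  refine Finset.sum_congr rfl fun k _ ↦ ?_
  split_ifs with hk
  · rw [abs_of_neg hk, negPart_of_nonpos hk.le]
  · rw [negPart_of_nonneg (not_lt.1 hk)]

end facetPyramid

lemma nPolytope_eq_smul (n m d : ℕ) : NPolytope n m d = (d : ℝ) • NPolytope n m 1 := by
  have hR : (d : ℝ) • Rpt n m 1 = Rpt n m d := by
    ext (k | k) <;> simp [Rpt]
  have hP : (fun i ↦ (d : ℝ) • Ppt n m 1 i) = Ppt n m d := by
    ext i k
    by_cases h : k = Sum.inl i <;> simp [Ppt, h]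
  have hQ : (fun j ↦ (d : ℝ) • Qpt n m 1 j) = Qpt n m d := by
    ext j k
    by_cases h : k = Sum.inr j <;> simp [Qpt, h]
  rw [NPolytope, NPolytope, ← convexHull_smul, smul_set_insert, smul_set_insert, smul_zero,
    smul_set_union, smul_set_range, smul_set_range, hR, hP, hQ]

lemma nPolytope_one_eq (n m : ℕ) :
    NPolytope n m 1 = convexHull ℝ (insert 0 (insert (Rpt n m 1)
      (range fun k ↦ (Pi.single k 1 : Fin (n - 1) ⊕ Fin m → ℝ)))) := by
  have : Sum.elim (Ppt n m 1) (Qpt n m 1) = fun k ↦ Pi.single k 1 := by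
    ext (i | j) k <;> simp [Ppt, Qpt, Pi.single_apply]
  rw [NPolytope, ← Set.Sum.elim_range, this]

lemma sum_rpt_one (n m : ℕ) : ∑ k, Rpt n m 1 k = -(n - 1 : ℕ) + m := by
  simp [Rpt, Fintype.sum_sum_type]

lemma sum_negPart_rpt_one (n m : ℕ) : ∑ k, (Rpt n m 1 k)⁻ = (n - 1 : ℕ) := by
  simp [Rpt, Fintype.sum_sum_type]

theorem stmt5_general (n m d : ℕ) (hnm : m < n) :
    MeasureTheory.volume (NPolytope n m d)
      = ENNReal.ofReal ((d : ℝ) ^ (n + m - 1) * n / (Nat.factorial (n + m - 1))) := by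
  have hcard : Fintype.card (Fin (n - 1) ⊕ Fin m) = n + m - 1 := by
    rw [Fintype.card_sum, Fintype.card_fin, Fintype.card_fin]
    omega
  have hn : ((n - 1 : ℕ) : ℝ) = n - 1 := by rw [Nat.cast_sub (by omega), Nat.cast_one]
  have hsum : ∑ k, Rpt n m 1 k ≤ 1 := by
    have : (m : ℝ) < n := by exact_mod_cast hnm
    rw [sum_rpt_one, hn]
    linarith
  rw [nPolytope_eq_smul, Measure.addHaar_smul, nPolytope_one_eq,
    volume_convexHull_insert_zero_insert hsum, sum_negPart_rpt_one, hn,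
    Module.finrank_fintype_fun_eq_card, hcard, ← ENNReal.ofReal_mul (abs_nonneg _),
    abs_of_nonneg (by positivity)]
  congr 1
  ring

/-- for `n > m ≥ 0`, `d ≥ 1`, `a ∈ ℂˣ`, the Euclidean volume of the Newton
polytope `Δ(f_a) ⊂ ℝ^{n+m-1}` equals `d^{n+m-1} · n / (n+m-1)!`. -/
theorem stmt5 (n m d : ℕ) (hnm : m < n) (hd : 1 ≤ d) (a : ℂ) (ha : a ≠ 0) :
    MeasureTheory.volume (NPolytope n m d)
      = ENNReal.ofReal ((d : ℝ) ^ (n + m - 1) * n / (Nat.factorial (n + m - 1))) :=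
  stmt5_general n m d hnm
end

section
/- Let n > m ≥ 1, d ≥ 1, and a ∈ ℂ×. For each proper face σ of the Newton polytope Δ(f_a) not containing the origin, the restricted Laurent polynomial f_{a,σ} = ∑_{τ ∈ σ ∩ ℤ^{n+m-1}} c(τ) z^τ has no critical point in (ℂ×)^{n+m-1}; i.e., f_a is non-degenerate with respect to its Newton polytope. -/
open Sum
open scoped Classical

lemma Rpt_eq_sum (n m d : ℕ) :
    Rpt n m d = (∑ j, Qpt n m d j) - (∑ i, Ppt n m d i) := by
  funext k
  simp only [Pi.sub_apply, Finset.sum_apply]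
  cases k with
  | inl i =>
      simp [Rpt, Qpt, Ppt, Finset.sum_ite_eq', eq_comm]
  | inr j =>
      simp [Rpt, Qpt, Ppt, Finset.sum_ite_eq', eq_comm]

/-- for `n > m ≥ 1`, `d ≥ 1`, `a ∈ ℂˣ`, the Laurent polynomial
`f_a = ∑ x_i^d − ∑ y_j^d + a·∏y_j^d/∏x_i^d` is non-degenerate: for every (nonempty, proper)
face `σ` of its Newton polytope not containing the origin, the restriction `f_{a,σ}` has no
critical point on the torus `(ℂˣ)^{n+m-1}`.  (A point of the torus is critical iff all
logarithmic derivatives `z_k ∂/∂z_k f_{a,σ}` vanish there.) -/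
theorem stmt6 (n m d : ℕ) (hm : 1 ≤ m) (hnm : m < n) (hd : 1 ≤ d) (a : ℂ) (ha : a ≠ 0)
    (σ : Set (Fin (n - 1) ⊕ Fin m → ℝ))
    (hσface : IsExposed ℝ (NPolytope n m d) σ) (hσne : σ.Nonempty)
    (hσproper : σ ≠ NPolytope n m d) (hσ0 : (0 : Fin (n - 1) ⊕ Fin m → ℝ) ∉ σ) :
    ¬ ∃ z : Fin (n - 1) ⊕ Fin m → ℂ, (∀ k, z k ≠ 0) ∧
      (∀ i0 : Fin (n - 1),
        (if Ppt n m d i0 ∈ σ then (d : ℂ) * z (inl i0) ^ d else 0)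
          - (if Rpt n m d ∈ σ then
              (d : ℂ) * (a * (∏ j, z (inr j) ^ d) / ∏ i, z (inl i) ^ d) else 0) = 0) ∧
      (∀ j0 : Fin m,
        -(if Qpt n m d j0 ∈ σ then (d : ℂ) * z (inr j0) ^ d else 0)
          + (if Rpt n m d ∈ σ then
              (d : ℂ) * (a * (∏ j, z (inr j) ^ d) / ∏ i, z (inl i) ^ d) else 0) = 0) := by
  rintro ⟨z, hz, hP, hQ⟩
  obtain ⟨l, hl⟩ := hσface hσne
  set V := insert (0 : Fin (n - 1) ⊕ Fin m → ℝ)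
      (insert (Rpt n m d) (Set.range (Ppt n m d) ∪ Set.range (Qpt n m d))) with hV
  have hVK : V ⊆ NPolytope n m d := subset_convexHull ℝ _
  have hdC : (d : ℂ) ≠ 0 := Nat.cast_ne_zero.2 (by omega)
  have hzd : ∀ k, z k ^ d ≠ 0 := fun k => pow_ne_zero _ (hz k)
  have hT : (d : ℂ) * (a * (∏ j, z (inr j) ^ d) / ∏ i, z (inl i) ^ d) ≠ 0 := by
    apply mul_ne_zero hdC
    apply div_ne_zero (mul_ne_zero ha (Finset.prod_ne_zero_iff.2 fun j _ => hzd _))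
      (Finset.prod_ne_zero_iff.2 fun i _ => hzd _)
  by_cases hR : Rpt n m d ∈ σ
  · -- All P_i and Q_j lie in σ
    have hPin : ∀ i, Ppt n m d i ∈ σ := by
      intro i
      have := hP i
      rw [if_pos hR, sub_eq_zero] at this
      by_contra h
      rw [if_neg h] at this
      exact hT this.symm
    have hQin : ∀ j, Qpt n m d j ∈ σ := by
      intro j
      have := hQ j
      rw [if_pos hR, neg_add_eq_zero] at this
      by_contra h
      rw [if_neg h] at this
      exact hT this.symm
    have hRK := hVK (Set.mem_insert_iff.2 (Or.inr (Set.mem_insert _ _)))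
    have hRσ := hR
    rw [hl] at hRσ
    obtain ⟨-, hRmax⟩ := hRσ
    -- l is constant c on σ, with c = l R
    have hlP : ∀ i, l (Ppt n m d i) = l (Rpt n m d) := by
      intro i
      have h1 := hPin i
      rw [hl] at h1
      exact le_antisymm (hRmax _ (hVK (Or.inr (Or.inr (Or.inl ⟨i, rfl⟩)))))
        (h1.2 _ hRK)
    have hlQ : ∀ j, l (Qpt n m d j) = l (Rpt n m d) := by
      intro j
      have h1 := hQin j
      rw [hl] at h1
      exact le_antisymm (hRmax _ (hVK (Or.inr (Or.inr (Or.inr ⟨j, rfl⟩)))))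
        (h1.2 _ hRK)
    -- c > 0
    have h0K : (0 : Fin (n - 1) ⊕ Fin m → ℝ) ∈ NPolytope n m d := hVK (Set.mem_insert _ _)
    have hc : 0 < l (Rpt n m d) := by
      have h0 : ¬ ∀ y ∈ NPolytope n m d, l y ≤ l 0 := fun h => hσ0 (by rw [hl]; exact ⟨h0K, h⟩)
      push_neg at h0
      obtain ⟨y, hyK, hy⟩ := h0
      rw [map_zero] at hy
      exact lt_of_lt_of_le hy (hRmax y hyK)
    -- compute l R
    have hcomp : l (Rpt n m d) = (m : ℝ) * l (Rpt n m d) - ((n - 1 : ℕ) : ℝ) * l (Rpt n m d) := by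
      conv_lhs => rw [Rpt_eq_sum n m d]
      rw [map_sub, map_sum, map_sum]
      simp only [hlP, hlQ, Finset.sum_const, Fintype.card_fin, nsmul_eq_mul, Finset.card_univ]
    have hmn : (m : ℝ) ≤ ((n - 1 : ℕ) : ℝ) := by
      exact_mod_cast Nat.le_sub_one_of_lt hnm
    nlinarith
  · -- no vertex lies in σ, contradicting nonemptiness
    have hPnot : ∀ i, Ppt n m d i ∉ σ := by
      intro i hin
      have := hP i
      rw [if_neg hR, if_pos hin, sub_zero] at this
      exact mul_ne_zero hdC (hzd _) this
    have hQnot : ∀ j, Qpt n m d j ∉ σ := by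
      intro j hin
      have := hQ j
      rw [if_neg hR, if_pos hin, add_zero, neg_eq_zero] at this
      exact mul_ne_zero hdC (hzd _) this
    obtain ⟨x, hx⟩ := hσne
    have hxσ := hx
    rw [hl] at hxσ
    obtain ⟨hxK, hxmax⟩ := hxσ
    have hxhull : x ∈ convexHull ℝ V := hxK
    obtain ⟨v, hvV, hvle⟩ :=
      (l.toLinearMap.convexOn convex_univ).exists_ge_of_mem_convexHull
        (Set.subset_univ V) hxhull
    have hvσ : v ∈ σ := by
      rw [hl]
      exact ⟨hVK hvV, fun y hy => le_trans (hxmax y hy) hvle⟩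
    rcases hvV with rfl | rfl | ⟨i, rfl⟩ | ⟨j, rfl⟩
    · exact hσ0 hvσ
    · exact hR hvσ
    · exact hPnot i hvσ
    · exact hQnot j hvσ
end

section
/- Let n = m ≥ 1, d ≥ 1, and a ∈ ℂ× with a ≠ 1. Then the Laurent polynomial f_a = ∑_{i=2}^n x_i^d − ∑_{j=1}^n y_j^d + a ∏_j y_j^d / ∏_i x_i^d is non-degenerate with respect to its Newton polytope. Conversely, if a = 1 then the system f_a = ∂_{x_i} f_a = ∂_{y_j} f_a = 0 has a solution on the torus (ℂ×)^{2n-1}, so f_1 is degenerate. -/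
open Sum
open scoped Classical

lemma exposed_contains_vertex {E : Type*} [NormedAddCommGroup E] [NormedSpace ℝ E]
    {S σ : Set E} (hS : S.Finite) (hσ : IsExposed ℝ (convexHull ℝ S) σ)
    (hne : σ.Nonempty) : ∃ s ∈ S, s ∈ σ := by
  obtain ⟨l, hl⟩ := hσ hne
  have hSne : S.Nonempty := by
    rcases hne with ⟨x, hx⟩
    by_contra h
    rw [Set.not_nonempty_iff_eq_empty] at h
    have := hl ▸ hx
    simp [h, convexHull_empty] at this
  obtain ⟨s, hsS, hmax⟩ := Set.exists_max_image S l hS hSne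
  refine ⟨s, hsS, ?_⟩
  rw [hl]
  refine ⟨subset_convexHull ℝ S hsS, fun y hy => ?_⟩
  exact convexHull_min (fun t ht => hmax t ht)
    (convex_halfSpace_le ⟨l.map_add, l.map_smul⟩ _) hy

/-- for `n = m ≥ 1`, `d ≥ 1`: (i) for every `a ∈ ℂˣ` with `a ≠ 1`, the Laurent
polynomial `f_a = ∑x_i^d − ∑y_j^d + a∏y_j^d/∏x_i^d` is non-degenerate with respect to its
Newton polytope (no face avoiding the origin carries a critical point on the torus);
(ii) for `a = 1` the system `f_1 = ∂f_1 = 0` has a solution on the torus `(ℂˣ)^{2n-1}`,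
so `f_1` is degenerate. -/
theorem stmt7 (n d : ℕ) (hn : 1 ≤ n) (hd : 1 ≤ d) :
    (∀ a : ℂ, a ≠ 0 → a ≠ 1 →
      ∀ σ : Set (Fin (n - 1) ⊕ Fin n → ℝ),
        IsExposed ℝ (NPolytope n n d) σ → σ.Nonempty →
        (0 : Fin (n - 1) ⊕ Fin n → ℝ) ∉ σ →
        ¬ ∃ z : Fin (n - 1) ⊕ Fin n → ℂ, (∀ k, z k ≠ 0) ∧
          (∀ i0 : Fin (n - 1),
            (if Ppt n n d i0 ∈ σ then (d : ℂ) * z (inl i0) ^ d else 0)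
              - (if Rpt n n d ∈ σ then
                  (d : ℂ) * (a * (∏ j, z (inr j) ^ d) / ∏ i, z (inl i) ^ d) else 0) = 0) ∧
          (∀ j0 : Fin n,
            -(if Qpt n n d j0 ∈ σ then (d : ℂ) * z (inr j0) ^ d else 0)
              + (if Rpt n n d ∈ σ then
                  (d : ℂ) * (a * (∏ j, z (inr j) ^ d) / ∏ i, z (inl i) ^ d) else 0) = 0))
    ∧ (∃ z : Fin (n - 1) ⊕ Fin n → ℂ, (∀ k, z k ≠ 0) ∧
        ((∑ i, z (inl i) ^ d) - (∑ j, z (inr j) ^ d)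
          + (∏ j, z (inr j) ^ d) / (∏ i, z (inl i) ^ d) = 0) ∧
        (∀ i0 : Fin (n - 1),
          (d : ℂ) * z (inl i0) ^ d
            - (d : ℂ) * ((∏ j, z (inr j) ^ d) / ∏ i, z (inl i) ^ d) = 0) ∧
        (∀ j0 : Fin n,
          -((d : ℂ) * z (inr j0) ^ d)
            + (d : ℂ) * ((∏ j, z (inr j) ^ d) / ∏ i, z (inl i) ^ d) = 0)) := by
  constructor
  · intro a ha0 ha1 σ hexp hne h0
    rintro ⟨z, hz, hP, hQ⟩
    have hd0 : (d : ℂ) ≠ 0 := Nat.cast_ne_zero.2 (by omega)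
    have hprodx : (∏ i, z (inl i) ^ d) ≠ 0 :=
      Finset.prod_ne_zero_iff.2 fun i _ => pow_ne_zero _ (hz _)
    have hprody : (∏ j, z (inr j) ^ d) ≠ 0 :=
      Finset.prod_ne_zero_iff.2 fun j _ => pow_ne_zero _ (hz _)
    have hTne : (d : ℂ) * (a * (∏ j, z (inr j) ^ d) / ∏ i, z (inl i) ^ d) ≠ 0 :=
      mul_ne_zero hd0 (div_ne_zero (mul_ne_zero ha0 hprody) hprodx)
    by_cases hR : Rpt n n d ∈ σ
    · have hPin : ∀ i, Ppt n n d i ∈ σ := by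
        intro i
        by_contra h
        have := hP i
        rw [if_neg h, if_pos hR, zero_sub, neg_eq_zero] at this
        exact hTne this
      have hQin : ∀ j, Qpt n n d j ∈ σ := by
        intro j
        by_contra h
        have := hQ j
        rw [if_neg h, if_pos hR, neg_zero, zero_add] at this
        exact hTne this
      have hPeq : ∀ i0, (d : ℂ) * z (inl i0) ^ d
          = (d : ℂ) * (a * (∏ j, z (inr j) ^ d) / ∏ i, z (inl i) ^ d) := by
        intro i0
        have := hP i0
        rw [if_pos (hPin i0), if_pos hR] at this
        exact sub_eq_zero.mp this
      have hQeq : ∀ j0, (d : ℂ) * z (inr j0) ^ d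
          = (d : ℂ) * (a * (∏ j, z (inr j) ^ d) / ∏ i, z (inl i) ^ d) := by
        intro j0
        have := hQ j0
        rw [if_pos (hQin j0), if_pos hR] at this
        linear_combination -this
      set c : ℂ := z (inr (⟨0, by omega⟩ : Fin n)) ^ d with hc
      have hcne : c ≠ 0 := pow_ne_zero _ (hz _)
      have hzli : ∀ i, z (inl i) ^ d = c := fun i =>
        mul_left_cancel₀ hd0 ((hPeq i).trans (hQeq _).symm)
      have hzrj : ∀ j, z (inr j) ^ d = c := fun j =>
        mul_left_cancel₀ hd0 ((hQeq j).trans (hQeq _).symm)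
      have hpx : (∏ i, z (inl i) ^ d) = c ^ (n - 1) := by
        rw [Finset.prod_congr rfl fun i _ => hzli i]; simp
      have hpy : (∏ j, z (inr j) ^ d) = c ^ n := by
        rw [Finset.prod_congr rfl fun j _ => hzrj j]; simp
      have main : (d : ℂ) * c = (d : ℂ) * (a * c ^ n / c ^ (n - 1)) := by
        rw [← hpx, ← hpy, hc]
        exact hQeq _
      have hpow : c ^ n = c ^ (n - 1) * c := by
        rw [← pow_succ]; congr 1; omega
      rw [hpow, mul_comm (c ^ (n - 1)) c, mul_div_assoc, mul_div_assoc,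
        div_self (pow_ne_zero _ hcne), mul_one] at main
      have h2 : c = a * c := mul_left_cancel₀ hd0 main
      exact ha1 ((mul_right_cancel₀ hcne (by rw [one_mul]; exact h2)).symm)
    · have hPn : ∀ i, Ppt n n d i ∉ σ := by
        intro i h
        have := hP i
        rw [if_pos h, if_neg hR, sub_zero, mul_eq_zero] at this
        rcases this with h' | h'
        · exact hd0 h'
        · exact hz _ (pow_eq_zero_iff (by omega) |>.1 h')
      have hQn : ∀ j, Qpt n n d j ∉ σ := by
        intro j h
        have := hQ j
        rw [if_pos h, if_neg hR, add_zero, neg_eq_zero, mul_eq_zero] at this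
        rcases this with h' | h'
        · exact hd0 h'
        · exact hz _ (pow_eq_zero_iff (by omega) |>.1 h')
      have hfin : (insert (0 : Fin (n-1) ⊕ Fin n → ℝ) (insert (Rpt n n d)
          (Set.range (Ppt n n d) ∪ Set.range (Qpt n n d)))).Finite := by
        apply Set.Finite.insert
        apply Set.Finite.insert
        exact (Set.finite_range _).union (Set.finite_range _)
      obtain ⟨s, hsS, hsσ⟩ := exposed_contains_vertex hfin hexp hne
      rcases hsS with rfl | rfl | ⟨i, rfl⟩ | ⟨j, rfl⟩
      · exact h0 hsσ
      · exact hR hsσ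
      · exact hPn i hsσ
      · exact hQn j hsσ
  · refine ⟨fun _ => 1, fun k => one_ne_zero, ?_, ?_, ?_⟩
    · simp only [one_pow, Finset.sum_const, Finset.prod_const, Finset.card_univ,
        Fintype.card_fin, nsmul_eq_mul, mul_one, one_div, inv_one]
      have : ((n - 1 : ℕ) : ℂ) = (n : ℂ) - 1 := by
        push_cast [Nat.cast_sub hn]; ring
      rw [this]; ring
    · intro i0; simp
    · intro j0; simp
end

section
/- Let p be prime, k = 𝔽_p, and let ω : 𝔽_p^× → K^× be the Teichmüller character into a p-adic field K containing a (p−1)-st root π of −p, with associated additive character ψ. For 0 ≤ a ≤ p−2, the Gauss sum G(ψ, ω^{−a}) = ∑_{x ∈ 𝔽_p^×} ψ(x) ω^{−a}(x) has p-adic valuation ord_p G(ψ, ω^{−a}) = a/(p−1). -/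
section StHelpers
variable {K : Type*} [Field K] (v : AbsoluteValue K ℝ)

private lemma st_sum_le (hv : IsNonarchimedean v) {ι : Type*} (s : Finset ι) (f : ι → K) {C : ℝ}
    (hC : 0 ≤ C) (h : ∀ i ∈ s, v (f i) ≤ C) : v (∑ i ∈ s, f i) ≤ C := by
  induction s using Finset.cons_induction with
  | empty => simpa using hC
  | cons i s hi ih =>
    rw [Finset.sum_cons]
    exact le_trans (hv _ _) (max_le (h i (Finset.mem_cons_self _ _))
      (ih fun j hj => h j (Finset.mem_cons_of_mem hj)))

private lemma st_add_eq (hv : IsNonarchimedean v) {x y : K} (h : v y < v x) :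
    v (x + y) = v x := by
  refine le_antisymm ((hv x y).trans (max_le le_rfl h.le)) ?_
  have h2 : v x ≤ max (v (x + y)) (v y) := by
    have := hv (x + y) (-y)
    simpa using this
  by_contra hlt
  push_neg at hlt
  exact absurd h2 (not_le.mpr (max_lt hlt h))

private lemma st_nat_le_one (hv : IsNonarchimedean v) (n : ℕ) : v (n : K) ≤ 1 := by
  induction n with
  | zero => simp
  | succ n ih =>
    push_cast
    exact (hv _ _).trans (max_le ih (le_of_eq v.map_one))

private lemma st_pow_sub_pow (hv : IsNonarchimedean v) {x y : K} (hx : v x ≤ 1) (hy : v y ≤ 1)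
    (n : ℕ) : v (x ^ n - y ^ n) ≤ v (x - y) := by
  induction n with
  | zero => simp
  | succ n ih =>
    have he : x ^ (n + 1) - y ^ (n + 1) = x * (x ^ n - y ^ n) + (x - y) * y ^ n := by ring
    rw [he]
    refine (hv _ _).trans (max_le ?_ ?_)
    · rw [v.map_mul]
      calc v x * v (x ^ n - y ^ n) ≤ 1 * v (x - y) :=
            mul_le_mul hx ih (v.nonneg _) zero_le_one
        _ = v (x - y) := one_mul _
    · rw [v.map_mul]
      calc v (x - y) * v (y ^ n) ≤ v (x - y) * 1 := by
            refine mul_le_mul_of_nonneg_left ?_ (v.nonneg _)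
            rw [v.map_pow]
            exact pow_le_one₀ (v.nonneg _) hy
        _ = v (x - y) := mul_one _

private lemma st_pow_left_inj {y z : ℝ} (hy : 0 ≤ y) (hz : 0 ≤ z) {n : ℕ} (hn : n ≠ 0)
    (h : y ^ n = z ^ n) : y = z := by
  rcases lt_trichotomy y z with hlt | he | hgt
  · exact absurd h (ne_of_lt (pow_lt_pow_left₀ hlt hy hn))
  · exact he
  · exact absurd h.symm (ne_of_lt (pow_lt_pow_left₀ hgt hz hn))

end StHelpers

/-- Stickelberger: let `K` be a field with a nonarchimedean absolute value
`v` normalized by `v(p) = p⁻¹` (so `ord_p p = 1`), `π ∈ K` with `π^{p−1} = −p`, `ψ` the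
additive character of `𝔽_p` associated with `π` by Dwork's theory (i.e. `ψ(1) ≡ 1 + π`
mod `π²`), and `ω` the Teichmüller character (the multiplicative lift with `ω(x) ≡ x`
mod the maximal ideal, valued in `(p−1)`-st roots of unity).  Then for `0 ≤ a ≤ p−2` the
Gauss sum `G(ψ, ω^{−a}) = ∑_{x∈𝔽_p^×} ψ(x) ω^{−a}(x)` has `ord_p = a/(p−1)`, i.e.
`v(G) = p^{−a/(p−1)}`. -/
theorem stmt12 (p : ℕ) [Fact p.Prime] {K : Type*} [Field K]
    (v : AbsoluteValue K ℝ) (hvna : IsNonarchimedean v)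
    (hvp : v (p : K) = (p : ℝ)⁻¹)
    (π : K) (hπ : π ^ (p - 1) = -(p : K))
    (ψ : AddChar (ZMod p) K) (hψ : v (ψ 1 - 1 - π) ≤ v π ^ 2)
    (ω : (ZMod p)ˣ →* Kˣ)
    (hωroot : ∀ x, ((ω x : Kˣ) : K) ^ (p - 1) = 1)
    (hωlift : ∀ x : (ZMod p)ˣ, v (((ω x : Kˣ) : K) - ((x : ZMod p).val : K)) < 1)
    (a : ℕ) (ha : a ≤ p - 2) :
    v (∑ x : (ZMod p)ˣ, ψ (x : ZMod p) * ((ω x : Kˣ) : K) ^ (-(a : ℤ)))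
      = (p : ℝ) ^ (-(a : ℝ) / ((p : ℝ) - 1)) := by
  classical
  have hp : p.Prime := Fact.out
  have hp2 : 2 ≤ p := hp.two_le
  set b : ℕ := p - 1 - a with hb
  have hab : a + b = p - 1 := by omega
  have hb1 : 1 ≤ b := by omega
  -- real basics
  have hpR : (1:ℝ) < (p:ℝ) := by exact_mod_cast hp.one_lt
  have hpinv_pos : 0 < (p:ℝ)⁻¹ := inv_pos.mpr (lt_trans one_pos hpR)
  have hpinv_lt : (p:ℝ)⁻¹ < 1 := inv_lt_one_of_one_lt₀ hpR
  -- valuation of π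
  have hvπpow : v π ^ (p - 1) = (p:ℝ)⁻¹ := by
    rw [← v.map_pow, hπ, v.map_neg, hvp]
  have hvπ_pos : 0 < v π := by
    rcases (v.nonneg π).lt_or_eq with h | h
    · exact h
    · exfalso
      rw [← h, zero_pow (by omega : p - 1 ≠ 0)] at hvπpow
      exact absurd hvπpow.symm (ne_of_gt hpinv_pos)
  have hvπ_lt : v π < 1 := by
    by_contra hc
    push_neg at hc
    have : (1:ℝ) ≤ v π ^ (p - 1) := one_le_pow₀ hc
    rw [hvπpow] at this
    linarith
  -- t x = val of x
  have htlt : ∀ x : (ZMod p)ˣ, (x : ZMod p).val < p := fun x => ZMod.val_lt _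
  have htcast : ∀ x : (ZMod p)ˣ, (((x : ZMod p).val : ℕ) : ZMod p) = (x : ZMod p) :=
    fun x => ZMod.natCast_rightInverse _
  have htndvd : ∀ x : (ZMod p)ˣ, ¬ p ∣ (x : ZMod p).val := by
    intro x hdvd
    have h0 : (((x : ZMod p).val : ℕ) : ZMod p) = 0 :=
      (ZMod.natCast_eq_zero_iff _ _).mpr hdvd
    rw [htcast x] at h0
    exact Units.ne_zero x h0
  -- valuations of integers
  have hvnat : ∀ n : ℕ, v (n : K) ≤ 1 := st_nat_le_one v hvna
  have hvint : ∀ m : ℤ, v (m : K) ≤ 1 := by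
    intro m
    rcases le_or_gt 0 m with h | h
    · lift m to ℕ using h; exact_mod_cast hvnat m
    · have : v ((-m : ℤ) : K) ≤ 1 := by
        lift (-m) to ℕ using (by omega) with n hn
        exact_mod_cast hvnat n
      rwa [Int.cast_neg, v.map_neg] at this
  have hvdvd : ∀ n : ℕ, p ∣ n → v (n : K) ≤ (p:ℝ)⁻¹ := by
    rintro n ⟨m, rfl⟩
    push_cast
    rw [v.map_mul, hvp]
    calc (p:ℝ)⁻¹ * v (m : K) ≤ (p:ℝ)⁻¹ * 1 :=
          mul_le_mul_of_nonneg_left (hvnat m) hpinv_pos.le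
      _ = (p:ℝ)⁻¹ := mul_one _
  have hvcop : ∀ n : ℕ, ¬ p ∣ n → v (n : K) = 1 := by
    intro n hnd
    refine le_antisymm (hvnat n) ?_
    have hcop : IsCoprime (p : ℤ) (n : ℤ) := by
      rw [Int.isCoprime_iff_gcd_eq_one]
      exact_mod_cast (Nat.Prime.coprime_iff_not_dvd hp).mpr hnd
    obtain ⟨u, w, huw⟩ := hcop
    have hcast : (u : K) * (p : K) + (w : K) * (n : K) = 1 := by
      have := congrArg (fun z : ℤ => (z : K)) huw
      push_cast at this
      simpa using this
    have h1 : (1:ℝ) ≤ max (v ((u:K) * (p:K))) (v ((w:K) * (n:K))) := by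
      rw [← v.map_one, ← hcast]
      exact hvna _ _
    have h2 : v ((u:K) * (p:K)) < 1 := by
      rw [v.map_mul, hvp]
      calc v (u:K) * (p:ℝ)⁻¹ ≤ 1 * (p:ℝ)⁻¹ :=
            mul_le_mul_of_nonneg_right (hvint u) hpinv_pos.le
        _ < 1 := by rw [one_mul]; exact hpinv_lt
    have h3 : (1:ℝ) ≤ v ((w:K) * (n:K)) := by
      rcases max_cases (v ((u:K) * (p:K))) (v ((w:K) * (n:K))) with ⟨he, _⟩ | ⟨he, _⟩
      · rw [he] at h1; linarith
      · rwa [he] at h1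
    calc (1:ℝ) ≤ v (w:K) * v (n:K) := by rwa [v.map_mul] at h3
      _ ≤ 1 * v (n:K) := mul_le_mul_of_nonneg_right (hvint w) (v.nonneg _)
      _ = v (n:K) := one_mul _
  -- valuation of ω x
  have hωv : ∀ x : (ZMod p)ˣ, v ((ω x : Kˣ) : K) = 1 := by
    intro x
    have h1 : v ((ω x : Kˣ) : K) ^ (p - 1) = 1 := by
      rw [← v.map_pow, hωroot x, v.map_one]
    have h2 : (1:ℝ) ^ (p - 1) = 1 := one_pow _
    exact st_pow_left_inj (v.nonneg _) zero_le_one (by omega) (h1.trans h2.symm)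
  -- ω x is p^{-1}-close to the Teichmüller representative
  have hωclose : ∀ x : (ZMod p)ˣ, v (((ω x : Kˣ) : K) - ((x : ZMod p).val : K)) ≤ (p:ℝ)⁻¹ := by
    intro x
    set u : K := ((ω x : Kˣ) : K) with hu
    set t : ℕ := (x : ZMod p).val with htx
    set c : K := (t : K) with hc
    have hvc : v c ≤ 1 := hvnat t
    have hvu : v u ≤ 1 := le_of_eq (hωv x)
    -- Fermat
    have ht1 : 1 ≤ t := by
      rcases Nat.eq_zero_or_pos t with h | h
      · exact absurd (show p ∣ t by simp [h]) (htndvd x)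
      · exact h
    have hfer : p ∣ t ^ (p - 1) - 1 := by
      rw [← ZMod.natCast_eq_zero_iff]
      have h1 : ((t : ZMod p)) ^ (p - 1) = 1 := by
        rw [htcast x]
        exact ZMod.pow_card_sub_one_eq_one (Units.ne_zero x)
      have h2 : 1 ≤ t ^ (p - 1) := Nat.one_le_pow _ _ (by omega)
      push_cast [Nat.cast_sub h2]
      rw [h1]
      ring
    have hvfer : v (1 - c ^ (p - 1)) ≤ (p:ℝ)⁻¹ := by
      have h2 : 1 ≤ t ^ (p - 1) := Nat.one_le_pow _ _ (by omega)
      have he : ((t ^ (p - 1) - 1 : ℕ) : K) = c ^ (p - 1) - 1 := by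
        push_cast [Nat.cast_sub h2]
        ring
      have : v (c ^ (p - 1) - 1) ≤ (p:ℝ)⁻¹ := he ▸ hvdvd _ hfer
      rwa [← v.map_neg, neg_sub] at this
    -- geometric sum factor
    set Sg : K := ∑ i ∈ Finset.range (p - 1), u ^ i * c ^ (p - 1 - 1 - i) with hSg
    have hfac : Sg * (u - c) = 1 - c ^ (p - 1) := by
      rw [hSg, geom_sum₂_mul, hωroot x]
    -- v Sg = 1
    have hd : ¬ p ∣ (p - 1) * t ^ (p - 2) := by
      intro hdvd
      rcases (Nat.Prime.dvd_mul hp).mp hdvd with h | h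
      · have := Nat.le_of_dvd (by omega) h
        omega
      · exact htndvd x (hp.dvd_of_dvd_pow h)
    have hvd : v (((p - 1) * t ^ (p - 2) : ℕ) : K) = 1 := hvcop _ hd
    have hdcast : (((p - 1) * t ^ (p - 2) : ℕ) : K) = ∑ i ∈ Finset.range (p - 1), c ^ i * c ^ (p - 1 - 1 - i) := by
      have h1 : ∀ i ∈ Finset.range (p - 1), c ^ i * c ^ (p - 1 - 1 - i) = c ^ (p - 2) := by
        intro i hi
        rw [← pow_add]
        congr 1
        have := Finset.mem_range.mp hi
        omega
      rw [Finset.sum_congr rfl h1, Finset.sum_const, Finset.card_range, nsmul_eq_mul]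
      push_cast [hc]
      ring
    have hvsub : v (Sg - (((p - 1) * t ^ (p - 2) : ℕ) : K)) < 1 := by
      rw [hdcast, hSg, ← Finset.sum_sub_distrib]
      have hbd : ∀ i ∈ Finset.range (p - 1),
          v (u ^ i * c ^ (p - 1 - 1 - i) - c ^ i * c ^ (p - 1 - 1 - i)) ≤ v (u - c) := by
        intro i _
        have he : u ^ i * c ^ (p - 1 - 1 - i) - c ^ i * c ^ (p - 1 - 1 - i)
            = (u ^ i - c ^ i) * c ^ (p - 1 - 1 - i) := by ring
        rw [he, v.map_mul]
        calc v (u ^ i - c ^ i) * v (c ^ (p - 1 - 1 - i))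
            ≤ v (u - c) * 1 := by
              refine mul_le_mul (st_pow_sub_pow v hvna hvu hvc i) ?_ (v.nonneg _) (v.nonneg _)
              rw [v.map_pow]
              exact pow_le_one₀ (v.nonneg _) hvc
          _ = v (u - c) := mul_one _
      exact lt_of_le_of_lt (st_sum_le v hvna _ _ (v.nonneg _) hbd) (hωlift x)
    have hvSg : v Sg = 1 := by
      have he : Sg = (((p - 1) * t ^ (p - 2) : ℕ) : K) + (Sg - (((p - 1) * t ^ (p - 2) : ℕ) : K)) := by
        ring
      rw [he, st_add_eq v hvna (by rw [hvd]; exact hvsub), hvd]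
    have := congrArg v hfac
    rw [v.map_mul, hvSg, one_mul] at this
    rw [this]
    exact hvfer
  -- negative power of ω equals b-th power
  have hωzpow : ∀ x : (ZMod p)ˣ, ((ω x : Kˣ) : K) ^ (-(a : ℤ)) = ((ω x : Kˣ) : K) ^ b := by
    intro x
    have h1 : ((ω x : Kˣ) : K) ^ a * ((ω x : Kˣ) : K) ^ b = 1 := by
      rw [← pow_add, hab, hωroot x]
    rw [zpow_neg, zpow_natCast]
    exact inv_eq_of_mul_eq_one_right h1
  have hωbclose : ∀ x : (ZMod p)ˣ,
      v (((ω x : Kˣ) : K) ^ (-(a : ℤ)) - (((x : ZMod p).val : K)) ^ b) ≤ (p:ℝ)⁻¹ := by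
    intro x
    rw [hωzpow x]
    exact le_trans (st_pow_sub_pow v hvna (le_of_eq (hωv x)) (hvnat _) b) (hωclose x)
  -- the sums S j and their integer approximations N j
  set S : ℕ → K := fun j => ∑ x : (ZMod p)ˣ,
      (((x : ZMod p).val.choose j : ℕ) : K) * ((ω x : Kˣ) : K) ^ (-(a : ℤ)) with hS
  set N : ℕ → ℕ := fun j => ∑ x : (ZMod p)ˣ,
      (x : ZMod p).val.choose j * (x : ZMod p).val ^ b with hN
  -- power sums over units of ZMod p
  have hsum_pow : ∀ m : ℕ, 1 ≤ m → m ≤ p - 1 →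
      (∑ x : (ZMod p)ˣ, ((x : ZMod p)) ^ m) = if m = p - 1 then (-1 : ZMod p) else 0 := by
    intro m hm1 hm2
    have h := FiniteField.sum_pow_units (ZMod p) m
    rw [ZMod.card] at h
    rw [h]
    rcases eq_or_ne m (p - 1) with he | he
    · rw [if_pos (by rw [he]), if_pos he]
    · rw [if_neg (fun hdvd => he (le_antisymm hm2 (Nat.le_of_dvd (by omega) hdvd))), if_neg he]
  -- the key mod-p computation
  have hNmod : ∀ j, j ≤ a → ((j.factorial * N j : ℕ) : ZMod p)
      = if j = a then (-1 : ZMod p) else 0 := by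
    intro j hj
    set Q : Polynomial (ZMod p) := descPochhammer (ZMod p) j with hQ
    have hQdeg : Q.natDegree = j := descPochhammer_natDegree _ _
    have step1 : ((j.factorial * N j : ℕ) : ZMod p)
        = ∑ x : (ZMod p)ˣ, Q.eval ((x : ZMod p)) * ((x : ZMod p)) ^ b := by
      have h1 : (j.factorial * N j : ℕ) = ∑ x : (ZMod p)ˣ,
          ((x : ZMod p).val.descFactorial j) * (x : ZMod p).val ^ b := by
        rw [hN, Finset.mul_sum]
        exact Finset.sum_congr rfl fun x _ => by
          rw [Nat.descFactorial_eq_factorial_mul_choose, mul_assoc]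
      rw [h1]
      push_cast
      refine Finset.sum_congr rfl fun x _ => ?_
      have h2 : Q.eval ((((x : ZMod p).val : ℕ) : ZMod p))
          = (((x : ZMod p).val.descFactorial j : ℕ) : ZMod p) :=
        descPochhammer_eval_eq_descFactorial _ _ _
      rw [htcast] at h2
      rw [← h2, htcast]
    have step2 : ∀ y : ZMod p, Q.eval y = ∑ i ∈ Finset.range (j + 1), Q.coeff i * y ^ i :=
      fun y => Polynomial.eval_eq_sum_range' (by omega) y
    calc ((j.factorial * N j : ℕ) : ZMod p)
        = ∑ x : (ZMod p)ˣ, ∑ i ∈ Finset.range (j + 1),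
            Q.coeff i * ((x : ZMod p)) ^ (i + b) := by
          rw [step1]
          refine Finset.sum_congr rfl fun x _ => ?_
          rw [step2, Finset.sum_mul]
          exact Finset.sum_congr rfl fun i _ => by rw [pow_add, mul_assoc]
      _ = ∑ i ∈ Finset.range (j + 1), Q.coeff i *
            ∑ x : (ZMod p)ˣ, ((x : ZMod p)) ^ (i + b) := by
          rw [Finset.sum_comm]
          exact Finset.sum_congr rfl fun i _ => (Finset.mul_sum _ _ _).symm
      _ = ∑ i ∈ Finset.range (j + 1), (if i = a then -Q.coeff i else 0) := by
          refine Finset.sum_congr rfl fun i hi => ?_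
          have hi' := Finset.mem_range.mp hi
          rw [hsum_pow (i + b) (by omega) (by omega)]
          rcases eq_or_ne i a with h | h
          · rw [if_pos (by omega), if_pos h, mul_neg_one]
          · rw [if_neg (by omega), if_neg h, mul_zero]
      _ = if j = a then (-1 : ZMod p) else 0 := by
          rw [Finset.sum_ite_eq' (Finset.range (j + 1)) a (fun i => -Q.coeff i)]
          rcases eq_or_ne j a with h | h
          · subst h
            rw [if_pos (Finset.mem_range.mpr (by omega)), if_pos rfl]
            have hmonic : Q.Monic := monic_descPochhammer _ _
            have : Q.coeff j = 1 := by
              have := hmonic.coeff_natDegree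
              rwa [hQdeg] at this
            rw [this]
          · rw [if_neg (by
              intro hmem
              have := Finset.mem_range.mp hmem
              omega), if_neg h]
  have hpa : ¬ p ∣ a.factorial := by
    intro h
    have := (Nat.Prime.dvd_factorial hp).mp h
    omega
  have hNj0 : ∀ j, j < a → p ∣ N j := by
    intro j hj
    have h0 := hNmod j hj.le
    rw [if_neg (ne_of_lt hj)] at h0
    push_cast at h0
    have hjfac : ((j.factorial : ℕ) : ZMod p) ≠ 0 := by
      rw [Ne, ZMod.natCast_eq_zero_iff]
      intro h
      have := (Nat.Prime.dvd_factorial hp).mp h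
      omega
    rw [← ZMod.natCast_eq_zero_iff]
    rcases mul_eq_zero.mp h0 with h | h
    · exact absurd h hjfac
    · exact h
  have hNa : p ∣ a.factorial * N a + 1 := by
    have h0 := hNmod a le_rfl
    rw [if_pos rfl] at h0
    rw [← ZMod.natCast_eq_zero_iff]
    push_cast
    push_cast at h0
    rw [h0]
    ring
  -- valuation estimates for S j
  have hvωa : ∀ x : (ZMod p)ˣ, v (((ω x : Kˣ) : K) ^ (-(a : ℤ))) = 1 := by
    intro x
    rw [hωzpow x, v.map_pow, hωv x, one_pow]
  have hSle : ∀ j, v (S j) ≤ 1 := by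
    intro j
    rw [hS]
    refine st_sum_le v hvna _ _ zero_le_one fun x _ => ?_
    rw [v.map_mul, hvωa x, mul_one]
    exact hvnat _
  have hSN : ∀ j, v (S j - ((N j : ℕ) : K)) ≤ (p:ℝ)⁻¹ := by
    intro j
    have he : S j - ((N j : ℕ) : K) = ∑ x : (ZMod p)ˣ,
        (((x : ZMod p).val.choose j : ℕ) : K) *
          (((ω x : Kˣ) : K) ^ (-(a : ℤ)) - (((x : ZMod p).val : K)) ^ b) := by
      rw [hS, hN]
      push_cast
      rw [← Finset.sum_sub_distrib]
      exact Finset.sum_congr rfl fun x _ => by ring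
    rw [he]
    refine st_sum_le v hvna _ _ hpinv_pos.le fun x _ => ?_
    rw [v.map_mul]
    calc v (((x : ZMod p).val.choose j : ℕ) : K)
          * v (((ω x : Kˣ) : K) ^ (-(a : ℤ)) - (((x : ZMod p).val : K)) ^ b)
        ≤ 1 * (p:ℝ)⁻¹ := mul_le_mul (hvnat _) (hωbclose x) (v.nonneg _) zero_le_one
      _ = (p:ℝ)⁻¹ := one_mul _
  have hSj : ∀ j, j < a → v (S j) ≤ (p:ℝ)⁻¹ := by
    intro j hj
    have he : S j = ((N j : ℕ) : K) + (S j - ((N j : ℕ) : K)) := by ring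
    rw [he]
    exact (hvna _ _).trans (max_le (hvdvd _ (hNj0 j hj)) (hSN j))
  have hSa : v (S a) = 1 := by
    have h1 : v ((a.factorial : K) * S a + 1) ≤ (p:ℝ)⁻¹ := by
      have he : (a.factorial : K) * S a + 1
          = (a.factorial : K) * (S a - ((N a : ℕ) : K)) + ((a.factorial * N a + 1 : ℕ) : K) := by
        push_cast
        ring
      rw [he]
      refine (hvna _ _).trans (max_le ?_ (hvdvd _ hNa))
      rw [v.map_mul]
      calc v (a.factorial : K) * v (S a - ((N a : ℕ) : K)) ≤ 1 * (p:ℝ)⁻¹ :=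
            mul_le_mul (hvnat _) (hSN a) (v.nonneg _) zero_le_one
        _ = (p:ℝ)⁻¹ := one_mul _
    have hlt : v ((a.factorial : K) * S a + 1) < v (-1 : K) := by
      rw [v.map_neg, v.map_one]
      exact lt_of_le_of_lt h1 hpinv_lt
    have h2 : v ((a.factorial : K) * S a) = 1 := by
      have he : (a.factorial : K) * S a = -1 + ((a.factorial : K) * S a + 1) := by ring
      rw [he, st_add_eq v hvna hlt, v.map_neg, v.map_one]
    have h3 : v (a.factorial : K) = 1 := hvcop _ hpa
    rw [v.map_mul, h3, one_mul] at h2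
    exact h2
  -- expansion of the additive character
  have hψx : ∀ x : (ZMod p)ˣ, ψ ((x : ZMod p)) = ψ 1 ^ (x : ZMod p).val := by
    intro x
    conv_lhs => rw [← htcast x]
    rw [show (((x : ZMod p).val : ℕ) : ZMod p) = (x : ZMod p).val • (1 : ZMod p) by
      rw [nsmul_eq_mul, mul_one], AddChar.map_nsmul_eq_pow]
  set θ : K := ψ 1 - 1 with hθdef
  have hθ : ψ 1 = 1 + θ := by rw [hθdef]; ring
  have hvθ : v θ = v π := by
    have hsq : v π ^ 2 < v π := by nlinarith
    have h1 : v (θ - π) < v π := lt_of_le_of_lt (by rw [hθdef]; exact hψ) hsq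
    have he : θ = π + (θ - π) := by ring
    rw [he, st_add_eq v hvna h1]
  have hbin : ∀ x : (ZMod p)ˣ, ψ ((x : ZMod p))
      = ∑ j ∈ Finset.range p, (((x : ZMod p).val.choose j : ℕ) : K) * θ ^ j := by
    intro x
    rw [hψx x, hθ, show (1 : K) + θ = θ + 1 by ring]
    calc (θ + 1) ^ (x : ZMod p).val
        = ∑ m ∈ Finset.range ((x : ZMod p).val + 1),
            θ ^ m * 1 ^ ((x : ZMod p).val - m) * ((x : ZMod p).val.choose m : K) :=
          add_pow θ 1 _
      _ = ∑ m ∈ Finset.range p,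
            θ ^ m * 1 ^ ((x : ZMod p).val - m) * ((x : ZMod p).val.choose m : K) := by
          refine Finset.sum_subset (Finset.range_subset_range.mpr (by have := htlt x; omega))
            fun m _ hm => ?_
          simp only [Finset.mem_range, not_lt] at hm
          rw [Nat.choose_eq_zero_of_lt (by omega), Nat.cast_zero, mul_zero]
      _ = ∑ j ∈ Finset.range p, (((x : ZMod p).val.choose j : ℕ) : K) * θ ^ j :=
          Finset.sum_congr rfl fun j _ => by rw [one_pow]; ring
  -- rewrite the Gauss sum
  have hG : (∑ x : (ZMod p)ˣ, ψ ((x : ZMod p)) * ((ω x : Kˣ) : K) ^ (-(a : ℤ)))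
      = ∑ j ∈ Finset.range p, S j * θ ^ j := by
    calc ∑ x : (ZMod p)ˣ, ψ ((x : ZMod p)) * ((ω x : Kˣ) : K) ^ (-(a : ℤ))
        = ∑ x : (ZMod p)ˣ, ∑ j ∈ Finset.range p,
            (((x : ZMod p).val.choose j : ℕ) : K) * ((ω x : Kˣ) : K) ^ (-(a : ℤ)) * θ ^ j := by
          refine Finset.sum_congr rfl fun x _ => ?_
          rw [hbin x, Finset.sum_mul]
          exact Finset.sum_congr rfl fun j _ => by ring
      _ = ∑ j ∈ Finset.range p, ∑ x : (ZMod p)ˣ,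
            (((x : ZMod p).val.choose j : ℕ) : K) * ((ω x : Kˣ) : K) ^ (-(a : ℤ)) * θ ^ j :=
          Finset.sum_comm
      _ = ∑ j ∈ Finset.range p, S j * θ ^ j := by
          refine Finset.sum_congr rfl fun j _ => ?_
          simp only [hS]
          rw [Finset.sum_mul]
  rw [hG]
  have hamem : a ∈ Finset.range p := Finset.mem_range.mpr (by omega)
  rw [← Finset.add_sum_erase _ _ hamem]
  have hvmain : v (S a * θ ^ a) = v π ^ a := by
    rw [v.map_mul, v.map_pow, hSa, hvθ, one_mul]
  have hvrest : v (∑ j ∈ (Finset.range p).erase a, S j * θ ^ j) ≤ v π ^ (a + 1) := by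
    refine st_sum_le v hvna _ _ (pow_nonneg hvπ_pos.le _) fun j hj => ?_
    have hjne : j ≠ a := Finset.ne_of_mem_erase hj
    have hjlt : j < p := Finset.mem_range.mp (Finset.mem_of_mem_erase hj)
    rw [v.map_mul, v.map_pow, hvθ]
    rcases lt_or_gt_of_ne hjne with h | h
    · calc v (S j) * v π ^ j ≤ (p:ℝ)⁻¹ * v π ^ j :=
            mul_le_mul_of_nonneg_right (hSj j h) (pow_nonneg hvπ_pos.le _)
        _ = v π ^ (p - 1) * v π ^ j := by rw [hvπpow]
        _ = v π ^ (p - 1 + j) := (pow_add _ _ _).symm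
        _ ≤ v π ^ (a + 1) := pow_le_pow_of_le_one hvπ_pos.le hvπ_lt.le (by omega)
    · calc v (S j) * v π ^ j ≤ 1 * v π ^ j :=
            mul_le_mul_of_nonneg_right (hSle j) (pow_nonneg hvπ_pos.le _)
        _ = v π ^ j := one_mul _
        _ ≤ v π ^ (a + 1) := pow_le_pow_of_le_one hvπ_pos.le hvπ_lt.le (by omega)
  have hstrict : v (∑ j ∈ (Finset.range p).erase a, S j * θ ^ j) < v (S a * θ ^ a) := by
    rw [hvmain]
    refine lt_of_le_of_lt hvrest ?_
    exact pow_lt_pow_right_of_lt_one₀ hvπ_pos hvπ_lt (Nat.lt_succ_self a)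
  rw [st_add_eq v hvna hstrict, hvmain]
  -- final real computation
  have hm0 : ((p - 1 : ℕ) : ℝ) = (p : ℝ) - 1 := by
    have h1 : (1:ℕ) ≤ p := by omega
    push_cast [Nat.cast_sub h1]
    ring
  have hppos : (0:ℝ) < (p:ℝ) := by linarith
  set r : ℝ := (p : ℝ) ^ (-(1:ℝ) / ((p:ℝ) - 1)) with hr
  have hrpos : 0 < r := Real.rpow_pos_of_pos hppos _
  have hrpow : r ^ (p - 1) = (p:ℝ)⁻¹ := by
    rw [hr, ← Real.rpow_natCast ((p : ℝ) ^ (-(1:ℝ) / ((p:ℝ) - 1))) (p - 1),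
      ← Real.rpow_mul hppos.le, hm0, div_mul_cancel₀ _ (by linarith : (p:ℝ) - 1 ≠ 0),
      Real.rpow_neg_one]
  have hvπr : v π = r :=
    st_pow_left_inj (v.nonneg _) hrpos.le (by omega : p - 1 ≠ 0) (hvπpow.trans hrpow.symm)
  rw [hvπr, hr, ← Real.rpow_natCast ((p : ℝ) ^ (-(1:ℝ) / ((p:ℝ) - 1))) a,
    ← Real.rpow_mul hppos.le]
  congr 1
  ring
end

section
/- Let n > m ≥ 0, d ≥ 1, a ∈ ℂ×, and let Δ = Δ(f_a) ⊂ ℝ^{n+m-1} be the Newton polytope of f_a = ∑_{i=2}^n x_i^d − ∑_{j=1}^m y_j^d + a∏y_j^d/∏x_i^d. For any point Q in the cone ℝ_{≥0}·Δ, the weight w(Q) = min{w ≥ 0 : Q ∈ w·Δ} equals (1/d)·max{h_2(Q), …, h_{n+1}(Q), 0}, where h_{n+1}(Q) = ∑_i u_i + ∑_j v_j and h_{i_0}(Q) = ∑_i u_i + ∑_j v_j − (n−m)u_{i_0} for 2 ≤ i_0 ≤ n. -/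
/-! `Δ` is the sublevel set `{H ≤ d}` of `H = max_k h_k` inside the cone, and `H` is positively
homogeneous, so `Q ∈ w • Δ` for `w > 0` exactly when `H Q ≤ w d`. The only other candidate is
`w = 0`, which requires `Q = 0`; this is forced when `H Q ≤ 0`, since no nonzero point of the
cone has `H ≤ 0`. -/

open Sum
open scoped Pointwise

/-- The Newton polytope `Δ(f_a)` of
`f_a = ∑_{i=2}^n x_i^d − ∑_{j=1}^m y_j^d + a∏y^d/∏x^d`, described by its defining
inequalities: `u_i + v_j ≥ 0`, `v_j ≥ 0`, and `h_k ≤ d` for `2 ≤ k ≤ n+1`, where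
`h_{n+1} = ∑u + ∑v` and `h_{i₀} = ∑u + ∑v − (n−m)u_{i₀}`. -/
def NPolyIneq (n m d : ℕ) : Set (Fin (n - 1) ⊕ Fin m → ℝ) :=
  {x | (∀ i j, 0 ≤ x (inl i) + x (inr j)) ∧ (∀ j, 0 ≤ x (inr j)) ∧
    ((∑ i, x (inl i)) + ∑ j, x (inr j)) ≤ d ∧
    ∀ i0 : Fin (n - 1),
      ((∑ i, x (inl i)) + ∑ j, x (inr j)) - ((n : ℝ) - m) * x (inl i0) ≤ d}

theorem isLeast_scale_mem_sublevel {E : Type*} [AddCommGroup E] [Module ℝ E] {C : Set E}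
    {H : E → ℝ} {r : ℝ} (hC : ∀ t : ℝ, 0 ≤ t → ∀ x ∈ C, t • x ∈ C)
    (hH : ∀ t : ℝ, 0 ≤ t → ∀ x, H (t • x) = t * H x)
    (hpointed : ∀ x ∈ C, H x ≤ 0 → x = 0) (hr : 0 < r) {Q : E} (hQ : Q ∈ C) :
    IsLeast {w : ℝ | 0 ≤ w ∧ Q ∈ w • {x ∈ C | H x ≤ r}} (r⁻¹ * max (H Q) 0) := by
  refine ⟨⟨by positivity, ?_⟩, ?_⟩
  · rcases le_or_gt (H Q) 0 with hQ0 | hQ0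
    · have hH0 : H 0 = 0 := by simpa using hH 0 le_rfl 0
      rw [max_eq_right hQ0, mul_zero, hpointed Q hQ hQ0, Set.zero_smul_set ⟨0, ?_⟩]
      · exact Set.mem_zero.2 rfl
      · exact ⟨by simpa using hC 0 le_rfl Q hQ, hH0.trans_le hr.le⟩
    · rw [max_eq_left hQ0.le]
      have hw : 0 < r⁻¹ * H Q := by positivity
      refine ⟨(r⁻¹ * H Q)⁻¹ • Q, ⟨hC _ (inv_nonneg.2 hw.le) Q hQ, ?_⟩,
        smul_inv_smul₀ hw.ne' Q⟩
      rw [hH _ (inv_nonneg.2 hw.le)]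
      exact (by field_simp : (r⁻¹ * H Q)⁻¹ * H Q = r).le
  · rintro w ⟨hw, x, ⟨-, hx⟩, rfl⟩
    rw [hH w hw, inv_mul_le_iff₀ hr]
    exact max_le (by nlinarith) (by positivity)

namespace NewtonPolytope

/-- The cone `ℝ_{≥0}·Δ(f_a)`. -/
def cone (n m : ℕ) : Set (Fin (n - 1) ⊕ Fin m → ℝ) :=
  {x | (∀ i j, 0 ≤ x (inl i) + x (inr j)) ∧ ∀ j, 0 ≤ x (inr j)}

/-- The linear forms `h_{n+1}` (at `none`) and `h_{i₀+2}` (at `some i₀`). -/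
def h (n m : ℕ) (x : Fin (n - 1) ⊕ Fin m → ℝ) (o : Option (Fin (n - 1))) : ℝ :=
  o.elim ((∑ i, x (inl i)) + ∑ j, x (inr j))
    (fun i0 => ((∑ i, x (inl i)) + ∑ j, x (inr j)) - ((n : ℝ) - m) * x (inl i0))

def maxH (n m : ℕ) (x : Fin (n - 1) ⊕ Fin m → ℝ) : ℝ :=
  Finset.univ.sup' Finset.univ_nonempty (h n m x)

variable {n m : ℕ}

theorem smul_mem_cone {t : ℝ} (ht : 0 ≤ t) {x : Fin (n - 1) ⊕ Fin m → ℝ} (hx : x ∈ cone n m) :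
    t • x ∈ cone n m := by
  refine ⟨fun i j => ?_, fun j => ?_⟩ <;> simp only [Pi.smul_apply, smul_eq_mul, ← mul_add]
  exacts [mul_nonneg ht (hx.1 i j), mul_nonneg ht (hx.2 j)]

theorem h_smul (t : ℝ) (x : Fin (n - 1) ⊕ Fin m → ℝ) (o : Option (Fin (n - 1))) :
    h n m (t • x) o = t * h n m x o := by
  cases o <;> simp only [h, Option.elim, Pi.smul_apply, smul_eq_mul, ← Finset.mul_sum] <;> ring

theorem maxH_smul {t : ℝ} (ht : 0 ≤ t) (x : Fin (n - 1) ⊕ Fin m → ℝ) :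
    maxH n m (t • x) = t * maxH n m x := by
  simp only [maxH, Finset.mul₀_sup' ht, h_smul]

theorem NPolyIneq_eq (d : ℕ) : NPolyIneq n m d = {x ∈ cone n m | maxH n m x ≤ d} := by
  ext x
  simp only [NPolyIneq, cone, maxH, Set.mem_ofPred_eq, Finset.sup'_le_iff, Finset.mem_univ,
    true_implies, Option.forall, h, Option.elim, and_assoc]

/-- Summing `u_i + v_j ≥ 0` over all `(i, j)` and `h_{i₀} ≤ 0` over all `i₀` forces `∑ u ≥ 0`;
with `h_{n+1} ≤ 0` and `v ≥ 0` this gives `∑ u = ∑ v = 0`, and then `h_{i₀} ≤ 0` gives `u ≥ 0`. -/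
theorem eq_zero_of_mem_cone_of_maxH_nonpos (hnm : m < n) {x : Fin (n - 1) ⊕ Fin m → ℝ}
    (hx : x ∈ cone n m) (hH : maxH n m x ≤ 0) : x = 0 := by
  obtain ⟨huv, hv⟩ := hx
  have hh : ∀ o, h n m x o ≤ 0 := fun o => (Finset.le_sup' _ (Finset.mem_univ o)).trans hH
  have hk : ((n - 1 : ℕ) : ℝ) = n - 1 := by rw [Nat.cast_sub (by omega), Nat.cast_one]
  have hnm' : (m : ℝ) < n := by exact_mod_cast hnm
  set A := ∑ i, x (inl i)
  set B := ∑ j, x (inr j)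
  have hAB : 0 ≤ m * A + (n - 1) * B := by
    have hj : ∀ j, 0 ≤ A + (n - 1) * x (inr j) := fun j => by
      have := Finset.sum_nonneg fun i (_ : i ∈ Finset.univ) => huv i j
      rwa [Finset.sum_add_distrib, Finset.sum_const, Finset.card_univ, Fintype.card_fin,
        nsmul_eq_mul, hk] at this
    have := Finset.sum_nonneg fun j (_ : j ∈ Finset.univ) => hj j
    rwa [Finset.sum_add_distrib, Finset.sum_const, Finset.card_univ, Fintype.card_fin,
      nsmul_eq_mul, ← Finset.mul_sum] at this
  have hBA : (n - 1) * (A + B) - (n - m) * A ≤ 0 := by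
    have := Finset.sum_nonpos fun i0 (_ : i0 ∈ Finset.univ) => hh (some i0)
    simp only [h, Option.elim] at this
    rwa [Finset.sum_sub_distrib, Finset.sum_const, Finset.card_univ, Fintype.card_fin,
      nsmul_eq_mul, ← Finset.mul_sum, hk] at this
  have hB0 : 0 ≤ B := Finset.sum_nonneg fun j _ => hv j
  have hS : A + B ≤ 0 := hh none
  have hA : A = 0 := by linarith
  have hB : B = 0 := by linarith
  have hu0 : ∀ i, 0 ≤ x (inl i) := fun i => by
    have := hh (some i)
    simp only [h, Option.elim] at this
    nlinarith
  ext (i | j)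
  · exact (Finset.sum_eq_zero_iff_of_nonneg fun i _ => hu0 i).1 hA i (Finset.mem_univ i)
  · exact (Finset.sum_eq_zero_iff_of_nonneg fun j _ => hv j).1 hB j (Finset.mem_univ j)

end NewtonPolytope

open NewtonPolytope in
theorem stmt16_general (n m d : ℕ) (hnm : m < n) (hd : 1 ≤ d)
    (Q : Fin (n - 1) ⊕ Fin m → ℝ)
    (hQ1 : ∀ i j, 0 ≤ Q (inl i) + Q (inr j)) (hQ2 : ∀ j, 0 ≤ Q (inr j)) :
    IsLeast {w : ℝ | 0 ≤ w ∧ Q ∈ w • NPolyIneq n m d}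
      ((d : ℝ)⁻¹ *
        max (Finset.univ.sup' Finset.univ_nonempty
          (fun o : Option (Fin (n - 1)) =>
            o.elim ((∑ i, Q (inl i)) + ∑ j, Q (inr j))
              (fun i0 => ((∑ i, Q (inl i)) + ∑ j, Q (inr j))
                - ((n : ℝ) - m) * Q (inl i0)))) 0) := by
  rw [NPolyIneq_eq]
  exact isLeast_scale_mem_sublevel (fun t ht x hx => smul_mem_cone ht hx)
    (fun t ht x => maxH_smul ht x) (fun x hx => eq_zero_of_mem_cone_of_maxH_nonpos hnm hx)
    (by exact_mod_cast hd) ⟨hQ1, hQ2⟩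

/-- for a point `Q` of the cone `ℝ_{≥0}·Δ(f_a)`, the weight
`w(Q) = min{w ≥ 0 : Q ∈ w·Δ}` equals `(1/d)·max{h_2(Q),…,h_{n+1}(Q),0}`. -/
theorem stmt16 (n m d : ℕ) (hnm : m < n) (hd : 1 ≤ d) (a : ℂ) (ha : a ≠ 0)
    (Q : Fin (n - 1) ⊕ Fin m → ℝ)
    (hQ1 : ∀ i j, 0 ≤ Q (inl i) + Q (inr j)) (hQ2 : ∀ j, 0 ≤ Q (inr j)) :
    IsLeast {w : ℝ | 0 ≤ w ∧ Q ∈ w • NPolyIneq n m d}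
      ((d : ℝ)⁻¹ *
        max (Finset.univ.sup' Finset.univ_nonempty
          (fun o : Option (Fin (n - 1)) =>
            o.elim ((∑ i, Q (inl i)) + ∑ j, Q (inr j))
              (fun i0 => ((∑ i, Q (inl i)) + ∑ j, Q (inr j))
                - ((n : ℝ) - m) * Q (inl i0)))) 0) :=
  stmt16_general n m d hnm hd Q hQ1 hQ2
end

section
/- Let p be an odd prime, n > m ≥ 0, d = p − 1, and a ∈ 𝔽_p^×. Consider the Laurent polynomial f̃_a(x_2,…,x_n,y_1,…,y_m) = ∑_{i=2}^n x_i^{p−1} − ∑_{j=1}^m y_j^{p−1} + a ∏_j y_j^{p−1}/∏_i x_i^{p−1} over 𝔽_p. Then for every codimension-1 face δ of Δ(f̃_a) not containing the origin, with vertices V_1,…,V_{n+m−1} (column vectors in ℤ^{n+m−1}), the group S(δ) of rational solutions r = (r_1,…,r_{n+m−1}) ∈ [0,1)^{n+m−1} of (V_1,…,V_{n+m−1})·r ≡ 0 (mod 1) is isomorphic to (ℤ/(p−1)ℤ)^{n+m−1}. -/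
open Sum

/-- The group `S(δ)` of solutions `r ∈ (ℚ/ℤ)^N` of `(V_1,…,V_N)·r ≡ 0 (mod 1)`,
for integral column vectors `V_1,…,V_N`.  (Representatives in `[0,1)^N` taken mod `1`.) -/
def solGroup (N : ℕ) {ι : Type*} [Fintype ι] (V : Fin N → ι → ℤ) :
    AddSubgroup (Fin N → AddCircle (1 : ℚ)) where
  carrier := {r | ∀ c : ι, ∑ k, V k c • r k = 0}
  zero_mem' := by intro c; simp
  add_mem' := by
    intro r s hr hs c
    simp only [Pi.add_apply, smul_add, Finset.sum_add_distrib, hr c, hs c, add_zero]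
  neg_mem' := by
    intro r hr c
    simp only [Pi.neg_apply, smul_neg, Finset.sum_neg_distrib, hr c, neg_zero]

/-! A vertex of a face avoiding the origin is `R` or one of the `d • e_c`, and the `N` vertices of
the face are distinct. So the matrix `(V_1, …, V_N)` is `d` times either a permutation matrix or,
with `R` in place of the one missing basis column, a matrix of determinant `±1`. In both cases the
congruences say exactly `d • r = 0`: `S(δ)` is the `d`-torsion of `(ℚ/ℤ)^N`, that is `(ℤ/d)^N`. -/

open Finset Function Module AddSubgroup

namespace AddCircle

variable {𝕜 : Type*} [Field 𝕜] [LinearOrder 𝕜] [IsStrictOrderedRing 𝕜] {p : 𝕜} [Fact (0 < p)]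
  {d : ℕ}

theorem mem_zmultiples_of_nsmul_eq_zero (hd : 0 < d) {u : AddCircle p} (hu : d • u = 0) :
    u ∈ zmultiples ((p / d : 𝕜) : AddCircle p) := by
  obtain ⟨m, -, rfl⟩ := (AddCircle.nsmul_eq_zero_iff hd).mp hu
  rw [natCast_div_mul_eq_nsmul]
  exact nsmul_mem (mem_zmultiples _) m

variable (p) in
noncomputable def zmodAddEquivTorsionBy (hd : 0 < d) : ZMod d ≃+ torsionBy (AddCircle p) d :=
  let g : torsionBy (AddCircle p) d :=
    ⟨(p / d : 𝕜), torsionBy.nsmul_iff.mpr <| by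
      simpa only [addOrderOf_period_div hd] using
        addOrderOf_nsmul_eq_zero ((p / d : 𝕜) : AddCircle p)⟩
  have hg : ∀ u, u ∈ zmultiples g := fun ⟨u, hu⟩ => by
    obtain ⟨m, hm⟩ := mem_zmultiples_iff.mp
      (mem_zmultiples_of_nsmul_eq_zero hd (torsionBy.nsmul_iff.mp hu))
    exact mem_zmultiples_iff.mpr ⟨m, Subtype.ext hm⟩
  zmodAddEquivOfGenerator hg (by
    rw [← Nat.card_congr (Equiv.subtypeUnivEquiv hg), Nat.card_zmultiples, ← addOrderOf_coe,
      addOrderOf_period_div hd])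

end AddCircle

section LinearSystem

variable {A κ ι : Type*} [AddCommGroup A] [Fintype κ] {d : ℕ}
  {V : κ → ι → ℤ} {r : κ → A}

theorem zsmul_eq_zero_of_dvd {z : ℤ} {x : A} (hz : (d : ℤ) ∣ z) (hx : d • x = 0) : z • x = 0 := by
  obtain ⟨w, rfl⟩ := hz
  rw [mul_comm, mul_zsmul, natCast_zsmul, hx, zsmul_zero]

theorem sum_zsmul_eq_zero_of_dvd (hV : ∀ k c, (d : ℤ) ∣ V k c) (hr : ∀ k, d • r k = 0) (c : ι) :
    ∑ k, V k c • r k = 0 :=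
  sum_eq_zero fun k _ => zsmul_eq_zero_of_dvd (hV k c) (hr k)

variable [DecidableEq κ]

theorem nsmul_eq_zero_of_sum_zsmul_eq_zero (e : κ → ι) (k₀ : κ)
    (hdiag : ∀ k, (V k (e k)).natAbs = d) (hdvd : ∀ c, (d : ℤ) ∣ V k₀ c)
    (hoff : ∀ k k', k' ≠ k → k' ≠ k₀ → V k' (e k) = 0)
    (hr : ∀ c, ∑ k, V k c • r k = 0) (k : κ) : d • r k = 0 := by
  -- Row `e k₀` involves `r k₀` alone; every other row `e k` involves only `r k` and `r k₀`.
  have key : ∀ k, (∀ k' ≠ k, V k' (e k) • r k' = 0) → d • r k = 0 := fun k h => by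
    rw [← hdiag k, natAbs_nsmul_eq_zero, ← hr (e k), sum_eq_single k (fun k' _ => h k') (by simp)]
  have h₀ : d • r k₀ = 0 := key k₀ fun k' hk' => by rw [hoff k₀ k' hk' hk', zero_smul]
  refine key k fun k' hk' => ?_
  by_cases h : k' = k₀
  · exact h ▸ zsmul_eq_zero_of_dvd (hdvd _) h₀
  · rw [hoff k k' hk' h, zero_smul]

theorem exists_notMem_range_of_card_le {k₀ : κ} [Fintype ι]
    (hcard : Fintype.card κ ≤ Fintype.card ι)
    (e : {k // k ≠ k₀} → ι) : ∃ c, c ∉ Set.range e := by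
  by_contra! h
  have := Fintype.card_le_of_surjective e fun c => h c
  simp only [Fintype.card_subtype_compl, Fintype.card_unique] at this
  have := Fintype.card_pos_iff.mpr ⟨k₀⟩
  omega

variable [DecidableEq ι] [Fintype ι] {R : ι → ℤ}

theorem forall_sum_zsmul_eq_zero_iff (hcard : Fintype.card ι = Fintype.card κ)
    (hR : ∀ c, (R c).natAbs = d) (hV : ∀ k, V k = R ∨ ∃ c, V k = Pi.single c (d : ℤ))
    (hinj : Injective V) :
    (∀ c, ∑ k, V k c • r k = 0) ↔ ∀ k, d • r k = 0 := by
  have hdvd : ∀ k c, (d : ℤ) ∣ V k c := fun k c => by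
    rcases hV k with h | ⟨c', h⟩
    · exact h ▸ Int.natAbs_dvd_natAbs.mp (by rw [hR c, Int.natAbs_natCast])
    · rw [h, Pi.single_apply]; split_ifs <;> simp
  refine ⟨fun hr => ?_, sum_zsmul_eq_zero_of_dvd hdvd⟩
  have single_ne {k k' : κ} {c c' : ι} (hk : V k = Pi.single c (d : ℤ))
      (hk' : V k' = Pi.single c' (d : ℤ)) (hne : k' ≠ k) : V k' c = 0 := by
    rw [hk', Pi.single_apply, if_neg]
    rintro rfl
    exact hne (hinj (hk'.trans hk.symm))
  by_cases hRV : ∃ k₀, V k₀ = R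
  · obtain ⟨k₀, hk₀⟩ := hRV
    have hsingle : ∀ k ≠ k₀, ∃ c, V k = Pi.single c (d : ℤ) := fun k hk =>
      (hV k).resolve_left fun h => hk (hinj (h.trans hk₀.symm))
    have : Nonempty ι := Fintype.card_pos_iff.mp (hcard ▸ Fintype.card_pos_iff.mpr ⟨k₀⟩)
    choose! e he using hsingle
    -- `R` takes the place of the coordinate `c₀` that no basis column hits.
    obtain ⟨c₀, hc₀⟩ := exists_notMem_range_of_card_le hcard.ge fun k : {k // k ≠ k₀} => e k
    refine nsmul_eq_zero_of_sum_zsmul_eq_zero (update e k₀ c₀) k₀ (fun k => ?_) (hdvd k₀)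
      (fun k k' hk' hk'₀ => ?_) hr
    · by_cases hk : k = k₀
      · subst hk; simp [hk₀, hR]
      · simp [update_of_ne hk, he k hk]
    · by_cases hk : k = k₀
      · subst hk
        rw [he k' hk'₀, update_self, Pi.single_apply, if_neg]
        exact fun h => hc₀ ⟨⟨k', hk'₀⟩, h.symm⟩
      · rw [update_of_ne hk]
        exact single_ne (he k hk) (he k' hk'₀) hk'
  · push Not at hRV
    choose e he using fun k => (hV k).resolve_left (hRV k)
    intro k
    refine nsmul_eq_zero_of_sum_zsmul_eq_zero e k (fun k => by simp [he]) (hdvd k)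
      (fun k k' hk' _ => single_ne (he k) (he k') hk') hr k

end LinearSystem

def AddSubgroup.piUnivEquiv {η : Type*} {f : η → Type*} [∀ i, AddGroup (f i)]
    (H : ∀ i, AddSubgroup (f i)) : pi Set.univ H ≃+ ∀ i, H i where
  toFun r i := ⟨r.1 i, r.2 i (Set.mem_univ i)⟩
  invFun t := ⟨fun i => t i, fun i _ => (t i).2⟩
  left_inv _ := rfl
  right_inv _ := rfl
  map_add' _ _ := rfl

theorem solGroup_eq_pi_torsionBy {N : ℕ} {ι : Type*} [Fintype ι] [DecidableEq ι] {d : ℕ}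
    {V : Fin N → ι → ℤ} {R : ι → ℤ} (hcard : Fintype.card ι = N) (hR : ∀ c, (R c).natAbs = d)
    (hV : ∀ k, V k = R ∨ ∃ c, V k = Pi.single c (d : ℤ)) (hinj : Injective V) :
    solGroup N V = pi Set.univ fun _ => torsionBy (AddCircle (1 : ℚ)) d := by
  ext r
  simp only [AddSubgroup.mem_pi, Set.mem_univ, forall_const, torsionBy.nsmul_iff]
  exact forall_sum_zsmul_eq_zero_iff (by simpa using hcard) hR hV hinj

theorem injective_of_finrank_vectorSpan_eq {k V P : Type*} [DivisionRing k] [AddCommGroup V]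
    [Module k V] [AddTorsor V P] {N : ℕ} (v : Fin N → P)
    (h : finrank k (vectorSpan k (Set.range v)) = N - 1) : Injective v := by
  cases N with
  | zero => exact injective_of_subsingleton v
  | succ N => exact ((affineIndependent_iff_finrank_vectorSpan_eq k v (by simp)).mpr h).injective

section NewtonPolytope

variable {n m d : ℕ}

def Rvec (n m d : ℕ) : Fin (n - 1) ⊕ Fin m → ℤ :=
  Sum.elim (fun _ => -(d : ℤ)) (fun _ => (d : ℤ))

theorem Rpt_eq_intCast : Rpt n m d = Int.cast ∘ Rvec n m d := by
  ext (c | c) <;> simp [Rpt, Rvec]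

theorem Ppt_eq_intCast (i : Fin (n - 1)) : Ppt n m d i = Int.cast ∘ Pi.single (inl i) (d : ℤ) := by
  ext c; simp only [Ppt, comp_apply, Pi.single_apply]; split_ifs <;> simp

theorem Qpt_eq_intCast (j : Fin m) : Qpt n m d j = Int.cast ∘ Pi.single (inr j) (d : ℤ) := by
  ext c; simp only [Qpt, comp_apply, Pi.single_apply]; split_ifs <;> simp

theorem natAbs_Rvec (c : Fin (n - 1) ⊕ Fin m) : (Rvec n m d c).natAbs = d := by
  cases c <;> simp [Rvec]

theorem eq_Rvec_or_single_of_mem_extremePoints {v : Fin (n - 1) ⊕ Fin m → ℤ}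
    (hv : Int.cast ∘ v ∈ Set.extremePoints ℝ (NPolytope n m d)) (hv0 : (Int.cast ∘ v : _ → ℝ) ≠ 0) :
    v = Rvec n m d ∨ ∃ c, v = Pi.single c (d : ℤ) := by
  have hcast : Injective (Int.cast ∘ · : (Fin (n - 1) ⊕ Fin m → ℤ) → _ → ℝ) :=
    Int.cast_injective.comp_left
  rcases extremePoints_convexHull_subset hv with h0 | hR | ⟨i, hP⟩ | ⟨j, hQ⟩
  · exact absurd h0 hv0
  · exact .inl (hcast (hR.trans Rpt_eq_intCast))
  · exact .inr ⟨inl i, hcast (hP.symm.trans (Ppt_eq_intCast i))⟩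
  · exact .inr ⟨inr j, hcast (hQ.symm.trans (Qpt_eq_intCast j))⟩

end NewtonPolytope

theorem stmt18_general (p : ℕ) (hp : p.Prime) (n m : ℕ) (hnm : m < n)
    (δ : Set (Fin (n - 1) ⊕ Fin m → ℝ))
    (hδ0 : (0 : Fin (n - 1) ⊕ Fin m → ℝ) ∉ δ)
    (hδdim : Module.finrank ℝ (affineSpan ℝ δ).direction = n + m - 2)
    (V : Fin (n + m - 1) → (Fin (n - 1) ⊕ Fin m) → ℤ)
    (hV : δ = convexHull ℝ (Set.range fun k => fun c => ((V k c : ℝ))))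
    (hVvert : ∀ k, (fun c => ((V k c : ℝ))) ∈ Set.extremePoints ℝ (NPolytope n m (p - 1))) :
    Nonempty ((solGroup (n + m - 1) V) ≃+ (Fin (n + m - 1) → ZMod (p - 1))) := by
  classical
  have hd : 0 < p - 1 := Nat.sub_pos_of_lt hp.one_lt
  have hcard : Fintype.card (Fin (n - 1) ⊕ Fin m) = n + m - 1 := by
    simp only [Fintype.card_sum, Fintype.card_fin]; omega
  have hinj : Injective V := by
    rw [hV, affineSpan_convexHull, direction_affineSpan] at hδdim
    have hvec := injective_of_finrank_vectorSpan_eq (k := ℝ) (fun k c => (V k c : ℝ))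
      (by rw [hδdim]; omega)
    exact hvec.of_comp (f := (Int.cast ∘ ·))
  have hvert : ∀ k, V k = Rvec n m (p - 1) ∨ ∃ c, V k = Pi.single c ((p - 1 : ℕ) : ℤ) :=
    fun k => eq_Rvec_or_single_of_mem_extremePoints (hVvert k)
      fun h0 => hδ0 (h0 ▸ hV ▸ subset_convexHull ℝ _ ⟨k, rfl⟩)
  exact ⟨(AddEquiv.addSubgroupCongr (solGroup_eq_pi_torsionBy hcard natAbs_Rvec hvert hinj)).trans <|
    (piUnivEquiv _).trans <|
      AddEquiv.piCongrRight fun _ => (AddCircle.zmodAddEquivTorsionBy 1 hd).symm⟩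

/-- for an odd prime `p`, `n > m ≥ 0`, `d = p−1` and `a ∈ 𝔽_p^×`, every
codimension-1 face `δ` of the Newton polytope of `f̃_a` not containing the origin, with
vertices `V_1,…,V_{n+m−1} ∈ ℤ^{n+m−1}`, has solution group
`S(δ) ≅ (ℤ/(p−1)ℤ)^{n+m−1}`. -/
theorem stmt18 (p : ℕ) (hp : p.Prime) (hodd : Odd p) (n m : ℕ) (hnm : m < n)
    (a : (ZMod p)ˣ)
    (δ : Set (Fin (n - 1) ⊕ Fin m → ℝ))
    (hδface : IsExposed ℝ (NPolytope n m (p - 1)) δ)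
    (hδ0 : (0 : Fin (n - 1) ⊕ Fin m → ℝ) ∉ δ)
    (hδdim : Module.finrank ℝ (affineSpan ℝ δ).direction = n + m - 2)
    (V : Fin (n + m - 1) → (Fin (n - 1) ⊕ Fin m) → ℤ)
    (hV : δ = convexHull ℝ (Set.range fun k => fun c => ((V k c : ℝ))))
    (hVvert : ∀ k, (fun c => ((V k c : ℝ))) ∈ Set.extremePoints ℝ (NPolytope n m (p - 1))) :
    Nonempty ((solGroup (n + m - 1) V) ≃+ (Fin (n + m - 1) → ZMod (p - 1))) :=
  stmt18_general p hp n m hnm δ hδ0 hδdim V hV hVvert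
end

section
/- Let n ≥ m ≥ 0, d ≥ 1 with a_i = d·α_i, b_j = d·β_j integers, and work in the relative twisted de Rham cohomology of f(x_i,y_j,z) = ∑_{i=2}^n x_i^d − ∑_{j=1}^m y_j^d + z ∏ y_j^d / ∏ x_i^d over the base with coordinate z, with Gauss–Manin operator D = ∇_{z∂_z} acting by Dω = z∂_z(ω) + z∂_z(f)·ω. For integers t_2,…,t_n, s_1,…,s_m and ω̃ = ∏_i x_i^{t_i} ∏_j y_j^{s_j} · (dx_2/x_2)∧⋯∧(dy_m/y_m), the following identities hold in cohomology: (D − t_i/d)·ω̃ = x_i^d·ω̃ for each 2 ≤ i ≤ n, and (D + s_j/d)·ω̃ = y_j^d·ω̃ for each 1 ≤ j ≤ m. -/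
open Sum

/-- Variable index set: `z`, the `x_i` (`2 ≤ i ≤ n`) and the `y_j` (`1 ≤ j ≤ m`). -/
abbrev HypVar (n m : ℕ) : Type := Unit ⊕ (Fin (n - 1) ⊕ Fin m)

/-- The algebra of Laurent polynomials `ℂ[z^±, x_i^±, y_j^±]`, i.e. the monoid algebra of
`ℤ^{HypVar n m}` over `ℂ`. -/
abbrev LaurentAlg (n m : ℕ) := AddMonoidAlgebra ℂ (HypVar n m →₀ ℤ)

/-- The monomial with exponent vector `τ`. -/
noncomputable def mono (n m : ℕ) (τ : HypVar n m → ℤ) : LaurentAlg n m :=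
  AddMonoidAlgebra.single (Finsupp.equivFunOnFinite.symm τ) 1

/-- The logarithmic derivative `w ∂/∂w` on Laurent polynomials:
`∑ c_τ X^τ ↦ ∑ τ_w · c_τ X^τ`. -/
noncomputable def logDerivVar (n m : ℕ) (w : HypVar n m) (g : LaurentAlg n m) :
    LaurentAlg n m :=
  Finsupp.sum g.coeff fun τ c => AddMonoidAlgebra.single τ ((τ w : ℂ) * c)

/-- The Laurent polynomial `f = ∑_{i=2}^n x_i^d − ∑_{j=1}^m y_j^d + z·∏y_j^d/∏x_i^d`. -/
noncomputable def fLaurent (n m d : ℕ) : LaurentAlg n m :=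
  (∑ i : Fin (n - 1), mono n m (fun v => if v = inr (inl i) then (d : ℤ) else 0))
    - (∑ j : Fin m, mono n m (fun v => if v = inr (inr j) then (d : ℤ) else 0))
    + mono n m (Sum.elim (fun _ => (1 : ℤ))
        (Sum.elim (fun _ => -(d : ℤ)) (fun _ => (d : ℤ))))

/-- The Gauss–Manin operator `D = ∇_{z∂_z}`, `D g = z∂_z g + z∂_z(f)·g`, on the chain
level computing the relative twisted de Rham cohomology in top degree. -/
noncomputable def DGM (n m d : ℕ) (g : LaurentAlg n m) : LaurentAlg n m :=
  logDerivVar n m (inl ()) g + logDerivVar n m (inl ()) (fLaurent n m d) * g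

/-- The twisted differential along the torus variable `w`:
`L_w(g) = w∂_w g + w∂_w(f)·g`.  The top-degree relative twisted de Rham cohomology is the
quotient of `LaurentAlg` by the span of the images of the `L_w`. -/
noncomputable def LGM (n m d : ℕ) (w : Fin (n - 1) ⊕ Fin m) (g : LaurentAlg n m) :
    LaurentAlg n m :=
  logDerivVar n m (inr w) g + logDerivVar n m (inr w) (fLaurent n m d) * g

/-- The submodule of relations: classes that vanish in the relative twisted de Rham
cohomology `H^{n+m-1}_dR(U/S, f)`. -/
noncomputable def relSubmodule (n m d : ℕ) : Submodule ℂ (LaurentAlg n m) :=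
  Submodule.span ℂ {h | ∃ w g, h = LGM n m d w g}

/-
`ω̃` is a monomial, so every logarithmic derivative acts on it by a scalar. Writing
`q = z ∏ y_j^d / ∏ x_i^d` (`zTerm`) for the only term of `f` that involves `z`, one gets `D ω̃ = q ω̃`,
while the twisted differentials along `x_i` and `y_j` give the exact classes
`L_{x_i} ω̃ = (t_i + d x_i^d − d q) ω̃` and `L_{y_j} ω̃ = (s_j + d q − d y_j^d) ω̃`.
Eliminating `q` expresses both identities as `∓ d⁻¹ L_w ω̃`.
-/

namespace LaurentAlg

variable {n m : ℕ}

noncomputable def logDerivLin (w : HypVar n m) : LaurentAlg n m →ₗ[ℂ] LaurentAlg n m where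
  toFun := logDerivVar n m w
  map_add' g h := by
    unfold logDerivVar
    rw [AddMonoidAlgebra.coeff_add, Finsupp.sum_add_index' (fun _ => by simp)
      (fun _ _ _ => by simp [mul_add, AddMonoidAlgebra.single_add])]
  map_smul' c g := by
    change logDerivVar n m w (c • g) = c • logDerivVar n m w g
    unfold logDerivVar
    rw [AddMonoidAlgebra.coeff_smul, Finsupp.sum_smul_index (fun _ => by simp), Finsupp.smul_sum]
    congr 1
    ext τ b
    rw [AddMonoidAlgebra.smul_single', mul_left_comm]

@[simp]
lemma logDerivLin_apply (w : HypVar n m) (g : LaurentAlg n m) :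
    logDerivLin w g = logDerivVar n m w g :=
  rfl

@[simp]
lemma logDerivVar_mono (w : HypVar n m) (τ : HypVar n m → ℤ) :
    logDerivVar n m w (mono n m τ) = (τ w : ℂ) • mono n m τ := by
  unfold logDerivVar mono
  rw [AddMonoidAlgebra.coeff_single, Finsupp.sum_single_index (by simp)]
  simp

noncomputable def varPow (w : HypVar n m) (k : ℤ) : LaurentAlg n m :=
  mono n m (fun v => if v = w then k else 0)

variable (n m) in
noncomputable def zTerm (d : ℕ) : LaurentAlg n m :=
  mono n m (Sum.elim (fun _ => 1) (Sum.elim (fun _ => -(d : ℤ)) (fun _ => (d : ℤ))))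

variable (n m) in
lemma fLaurent_eq (d : ℕ) :
    fLaurent n m d = ∑ i, varPow (inr (inl i)) d - ∑ j, varPow (inr (inr j)) d + zTerm n m d :=
  rfl

lemma logDerivVar_varPow (w v : HypVar n m) (k : ℤ) :
    logDerivVar n m w (varPow v k) = (if w = v then (k : ℂ) else 0) • varPow v k := by
  rw [varPow, logDerivVar_mono]
  split_ifs <;> simp

variable (n m) in
lemma logDerivVar_z_fLaurent (d : ℕ) :
    logDerivVar n m (inl ()) (fLaurent n m d) = zTerm n m d := by
  rw [fLaurent_eq, ← logDerivLin_apply, map_add, map_sub, map_sum, map_sum]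
  simp [logDerivVar_varPow, zTerm]

lemma logDerivVar_x_fLaurent (d : ℕ) (i : Fin (n - 1)) :
    logDerivVar n m (inr (inl i)) (fLaurent n m d)
      = (d : ℂ) • varPow (inr (inl i)) d - (d : ℂ) • zTerm n m d := by
  rw [fLaurent_eq, ← logDerivLin_apply, map_add, map_sub, map_sum, map_sum]
  simp [logDerivVar_varPow, zTerm, sub_eq_add_neg]

lemma logDerivVar_y_fLaurent (d : ℕ) (j : Fin m) :
    logDerivVar n m (inr (inr j)) (fLaurent n m d)
      = (d : ℂ) • zTerm n m d - (d : ℂ) • varPow (inr (inr j)) d := by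
  rw [fLaurent_eq, ← logDerivLin_apply, map_add, map_sub, map_sum, map_sum]
  simp [logDerivVar_varPow, zTerm, sub_eq_add_neg, add_comm]

lemma DGM_mono (d : ℕ) (τ : HypVar n m → ℤ) :
    DGM n m d (mono n m τ) = (τ (inl ()) : ℂ) • mono n m τ + zTerm n m d * mono n m τ := by
  rw [DGM, logDerivVar_mono, logDerivVar_z_fLaurent]

lemma LGM_mem_relSubmodule (d : ℕ) (w : Fin (n - 1) ⊕ Fin m) (g : LaurentAlg n m) :
    LGM n m d w g ∈ relSubmodule n m d :=
  Submodule.subset_span ⟨w, g, rfl⟩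

lemma DGM_sub_varPow_x_mul_mono {d : ℕ} (hd : (d : ℂ) ≠ 0) (i : Fin (n - 1))
    (τ : HypVar n m → ℤ) :
    DGM n m d (mono n m τ) - ((τ (inl ()) : ℂ) + τ (inr (inl i)) / d) • mono n m τ
        - varPow (inr (inl i)) d * mono n m τ
      = -(d : ℂ)⁻¹ • LGM n m d (inl i) (mono n m τ) := by
  rw [DGM_mono, LGM, logDerivVar_mono, logDerivVar_x_fLaurent]
  simp only [sub_mul, smul_mul_assoc]
  match_scalars <;> field_simp
  ring

lemma DGM_sub_varPow_y_mul_mono {d : ℕ} (hd : (d : ℂ) ≠ 0) (j : Fin m)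
    (τ : HypVar n m → ℤ) :
    DGM n m d (mono n m τ) - ((τ (inl ()) : ℂ) - τ (inr (inr j)) / d) • mono n m τ
        - varPow (inr (inr j)) d * mono n m τ
      = (d : ℂ)⁻¹ • LGM n m d (inr j) (mono n m τ) := by
  rw [DGM_mono, LGM, logDerivVar_mono, logDerivVar_y_fLaurent]
  simp only [sub_mul, smul_mul_assoc]
  match_scalars <;> field_simp
  ring

end LaurentAlg

open LaurentAlg

theorem stmt19_general (n m d : ℕ) (hd : 1 ≤ d)
    (t : Fin (n - 1) → ℤ) (s : Fin m → ℤ)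
    (ω : LaurentAlg n m)
    (hω : ω = mono n m (Sum.elim (fun _ => (0 : ℤ)) (Sum.elim t s))) :
    (∀ i : Fin (n - 1),
      DGM n m d ω - ((t i : ℂ) / (d : ℂ)) • ω
          - mono n m (fun v => if v = inr (inl i) then (d : ℤ) else 0) * ω
        ∈ relSubmodule n m d) ∧
    (∀ j : Fin m,
      DGM n m d ω + ((s j : ℂ) / (d : ℂ)) • ω
          - mono n m (fun v => if v = inr (inr j) then (d : ℤ) else 0) * ω
        ∈ relSubmodule n m d) := by
  have hd₀ : (d : ℂ) ≠ 0 := by exact_mod_cast (by omega : d ≠ 0)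
  subst hω
  refine ⟨fun i => ?_, fun j => ?_⟩
  · have h := DGM_sub_varPow_x_mul_mono (m := m) hd₀ i (Sum.elim (fun _ => 0) (Sum.elim t s))
    simp only [Sum.elim_inl, Sum.elim_inr, Int.cast_zero, zero_add] at h
    exact h ▸ Submodule.smul_mem _ _ (LGM_mem_relSubmodule d _ _)
  · have h := DGM_sub_varPow_y_mul_mono (n := n) hd₀ j (Sum.elim (fun _ => 0) (Sum.elim t s))
    simp only [Sum.elim_inl, Sum.elim_inr, Int.cast_zero, zero_sub, neg_smul, sub_neg_eq_add] at h
    exact h ▸ Submodule.smul_mem _ _ (LGM_mem_relSubmodule d _ _)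

/-- for `ω̃ = ∏ x_i^{t_i} ∏ y_j^{s_j} · dx/x ∧ dy/y`, in relative twisted de
Rham cohomology one has `(D − t_i/d)·ω̃ = x_i^d·ω̃` and `(D + s_j/d)·ω̃ = y_j^d·ω̃`,
i.e. the corresponding differences are relations. -/
theorem stmt19 (n m d : ℕ) (hnm : m ≤ n) (hd : 1 ≤ d)
    (α : Fin n → ℚ) (β : Fin m → ℚ)
    (A : Fin n → ℤ) (hA : ∀ i, (A i : ℚ) = d * α i)
    (B : Fin m → ℤ) (hB : ∀ j, (B j : ℚ) = d * β j)
    (t : Fin (n - 1) → ℤ) (s : Fin m → ℤ)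
    (ω : LaurentAlg n m)
    (hω : ω = mono n m (Sum.elim (fun _ => (0 : ℤ)) (Sum.elim t s))) :
    (∀ i : Fin (n - 1),
      DGM n m d ω - ((t i : ℂ) / (d : ℂ)) • ω
          - mono n m (fun v => if v = inr (inl i) then (d : ℤ) else 0) * ω
        ∈ relSubmodule n m d) ∧
    (∀ j : Fin m,
      DGM n m d ω + ((s j : ℂ) / (d : ℂ)) • ω
          - mono n m (fun v => if v = inr (inr j) then (d : ℤ) else 0) * ω
        ∈ relSubmodule n m d) :=
  stmt19_general n m d hd t s ω hω
end
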